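/- arXiv:2307.13016 — 8 statements merged into one kernel-verified Lean document; each statement's English description precedes it below -/
import Mathlib

section
/- In Smart Linear Hashing with modulus m and n bins (hash h_a(x) = ⌊(a·x mod m)/(m/n)⌋ with a uniform in the units of Z_m), any two distinct elements x, y with gcd(x−y, m) > ⌈m/n⌉ never hash to the same bin, for any choice of the unit a. -/
/-! Since `k = gcd(x - y, m)` divides both `x - y` and `m`, the residues `a x mod m` and `a y mod m`
are congruent mod `k`; since `a` is a unit they are distinct. Hence they are at least
`k > ⌈m/n⌉ ≥ m/n` apart, whereas two points of one bin of width `m/n` are less than `m/n` apart. -/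

theorem floor_div_ne_floor_div_of_le_abs_sub {K : Type*} [Field K] [LinearOrder K]
    [IsStrictOrderedRing K] [FloorRing K] {a b d : K} (hd : 0 < d) (h : d ≤ |a - b|) :
    ⌊a / d⌋ ≠ ⌊b / d⌋ := by
  intro heq
  have hlt : |a / d - b / d| < 1 := Int.abs_sub_lt_one_of_floor_eq_floor heq
  rw [← sub_div, abs_div, abs_of_pos hd, div_lt_one hd] at hlt
  exact hlt.not_ge h

namespace Int

theorem not_modEq_of_ne {m x y : ℤ} (hx0 : 0 ≤ x) (hxm : x < m) (hy0 : 0 ≤ y) (hym : y < m)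
    (hxy : x ≠ y) : ¬ x ≡ y [ZMOD m] := by
  rwa [ModEq, emod_eq_of_lt hx0 hxm, emod_eq_of_lt hy0 hym]

theorem not_modEq_mul_left_of_isCoprime {a m x y : ℤ} (ha : IsCoprime a m)
    (hxy : ¬ x ≡ y [ZMOD m]) : ¬ a * x ≡ a * y [ZMOD m] := by
  rw [modEq_iff_dvd, ← mul_sub]
  exact fun h => hxy (modEq_iff_dvd.2 (ha.symm.dvd_of_dvd_mul_left h))

theorem gcd_sub_le_abs_mul_emod_sub_mul_emod {a m x y : ℤ} (ha : IsCoprime a m)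
    (hxy : ¬ x ≡ y [ZMOD m]) : (gcd (x - y) m : ℤ) ≤ |a * x % m - a * y % m| := by
  have hne : a * x % m - a * y % m ≠ 0 := sub_ne_zero.2 (not_modEq_mul_left_of_isCoprime ha hxy)
  have hkm : (gcd (x - y) m : ℤ) ∣ m := gcd_dvd_right _ _
  have hcongr : a * y % m ≡ a * x % m [ZMOD gcd (x - y) m] :=
    ((mod_modEq _ m).of_dvd hkm).trans <|
      ((modEq_iff_dvd.2 (gcd_dvd_left _ _)).mul_left a).trans ((mod_modEq _ m).of_dvd hkm).symm
  exact le_of_dvd (abs_pos.2 hne) ((dvd_abs _ _).2 (modEq_iff_dvd.1 hcongr))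

end Int

theorem stmt_4_general (m n : ℕ) (hn : 0 < n) (x y : ℤ)
    (hx0 : 0 ≤ x) (hxm : x < m) (hy0 : 0 ≤ y) (hym : y < m) (hxy : x ≠ y)
    (hgcd : ⌈(m : ℚ) / n⌉ < (Int.gcd (x - y) m : ℤ)) :
    ∀ a : ℤ, IsCoprime a (m : ℤ) →
      ⌊((a * x % m : ℤ) : ℝ) / ((m : ℝ) / n)⌋ ≠ ⌊((a * y % m : ℤ) : ℝ) / ((m : ℝ) / n)⌋ := by
  intro a ha
  have hm : (0 : ℝ) < m := by exact_mod_cast hx0.trans_lt hxm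
  have hwidth : ((m : ℚ) / n) < (Int.gcd (x - y) m : ℚ) :=
    (Int.le_ceil _).trans_lt (by exact_mod_cast hgcd)
  replace hwidth := (Rat.cast_lt (K := ℝ)).2 hwidth
  push_cast at hwidth
  refine floor_div_ne_floor_div_of_le_abs_sub (by positivity) ?_
  calc (m : ℝ) / n ≤ (Int.gcd (x - y) m : ℝ) := hwidth.le
    _ ≤ ((|a * x % m - a * y % m| : ℤ) : ℝ) := by
      exact_mod_cast Int.gcd_sub_le_abs_mul_emod_sub_mul_emod ha
        (Int.not_modEq_of_ne hx0 hxm hy0 hym hxy)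
    _ = |((a * x % m : ℤ) : ℝ) - ((a * y % m : ℤ) : ℝ)| := by push_cast; rfl

/-- In Smart Linear Hashing with modulus `m` and `n` bins, two distinct elements
`x, y` with `gcd(x - y, m) > ⌈m/n⌉` never hash to the same bin, for any unit
multiplier `a`. -/
theorem stmt_4 (m n : ℕ) (hm : 0 < m) (hn : 0 < n) (x y : ℤ)
    (hx0 : 0 ≤ x) (hxm : x < m) (hy0 : 0 ≤ y) (hym : y < m) (hxy : x ≠ y)
    (hgcd : ⌈(m : ℚ) / n⌉ < (Int.gcd (x - y) m : ℤ)) :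
    ∀ a : ℤ, IsCoprime a (m : ℤ) →
      ⌊((a * x % m : ℤ) : ℝ) / ((m : ℝ) / n)⌋ ≠ ⌊((a * y % m : ℤ) : ℝ) / ((m : ℝ) / n)⌋ :=
  stmt_4_general m n hn x y hx0 hxm hy0 hym hxy hgcd
end

section
/- Let m ≥ 2 and let a be uniform on the units Z_m^×. For any fixed nonzero residue z ∈ Z_m, and any interval I ⊆ {0,...,m-1} of length at most ⌈m/n⌉+1, if gcd(z, m) ≤ ⌈m/n⌉ then Pr[a·z mod m ∈ I] ≤ O((log log m)/n). -/
/-!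
Write `k = gcd(z, m)`. On `{0, …, m-1}` the map `a ↦ a z mod m` only takes multiples of `k` as
values, each at most `k` times, so at most `len + 2k ≤ 7m/n` residues `a` land in the interval.
It remains to show `m / φ(m) = O(log log m)`. Now `m / φ(m) = ∏_{p ∣ m} p/(p-1)` is at most
`exp (∑_{p ∣ m} 1/(p-1))`. As `m` has at most `log₂ m` prime factors, those above
`T = log₂ m + 1` contribute at most `1` to the sum, and the others at most `log log T + O(1)` by
Mertens' estimate `∑_{p ≤ T} 1/p ≤ log log T + O(1)`. The latter follows by partial summation
from `∑_{p ≤ n} log p / p ≤ log n + log 4`, which compares `n ∑_{p ≤ n} log p / p` with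
`log n! = ∑_p v_p(n!) log p` and Chebyshev's bound `θ(n) ≤ n log 4`.
-/

open Finset Real
open scoped Nat

theorem Nat.div_le_factorization_factorial {p : ℕ} (hp : p.Prime) (n : ℕ) :
    n / p ≤ (n !).factorization p := by
  rw [Nat.factorization_factorial hp (Nat.lt_add_of_pos_right two_pos)]
  simpa using single_le_sum (f := fun i => n / p ^ i) (fun _ _ => Nat.zero_le _)
    (show 1 ∈ Ico 1 (Nat.log p n + 2) by simp)

theorem sum_primesLE_div_mul_log_le_log_factorial (n : ℕ) :
    ∑ p ∈ Nat.primesLE n, ((n / p : ℕ) : ℝ) * log p ≤ log (n ! : ℕ) := by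
  rw [log_nat_eq_sum_factorization, Finsupp.sum, Nat.support_factorization]
  calc ∑ p ∈ Nat.primesLE n, ((n / p : ℕ) : ℝ) * log p
      ≤ ∑ p ∈ Nat.primesLE n, ((n !).factorization p : ℝ) * log p := by
        refine sum_le_sum fun p hp => ?_
        gcongr
        exact_mod_cast Nat.div_le_factorization_factorial (Nat.mem_primesLE.mp hp).2 n
    _ ≤ ∑ p ∈ (n !).primeFactors, ((n !).factorization p : ℝ) * log p := by
        refine sum_le_sum_of_subset_of_nonneg (fun p hp => ?_) fun p _ _ => by positivity
        have ⟨hpn, hp⟩ := Nat.mem_primesLE.mp hp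
        exact Nat.mem_primeFactors.mpr ⟨hp, Nat.dvd_factorial hp.pos hpn, Nat.factorial_ne_zero n⟩

theorem sum_primesLE_log_div_le (n : ℕ) :
    ∑ p ∈ Nat.primesLE n, log p / p ≤ log n + log 4 := by
  rcases Nat.eq_zero_or_pos n with rfl | hn
  · simpa using log_nonneg (by norm_num : (1 : ℝ) ≤ 4)
  have hn0 : (0 : ℝ) < n := by exact_mod_cast hn
  have hterm : ∀ p ∈ Nat.primesLE n, n * (log p / p) ≤ ((n / p : ℕ) : ℝ) * log p + log p := by
    intro p hp
    have hp := (Nat.mem_primesLE.mp hp).2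
    have hdiv : (n : ℝ) / p ≤ ((n / p : ℕ) : ℝ) + 1 := by
      rw [div_le_iff₀ (by exact_mod_cast hp.pos)]
      exact_mod_cast (Nat.lt_mul_div_succ n hp.pos).le.trans_eq (mul_comm _ _)
    calc n * (log p / p) = n / p * log p := by ring
      _ ≤ (((n / p : ℕ) : ℝ) + 1) * log p := by gcongr
      _ = ((n / p : ℕ) : ℝ) * log p + log p := by ring
  have hfact : log (n ! : ℕ) ≤ n * log n := by
    rw [← log_pow]
    exact log_le_log (by positivity) (by exact_mod_cast Nat.factorial_le_pow n)
  have htheta : ∑ p ∈ Nat.primesLE n, log p ≤ n * log 4 := by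
    rw [← Chebyshev.theta_eq_sum_primesLE_log, mul_comm]
    exact Chebyshev.theta_le_log4_mul_x hn0.le
  rw [← mul_le_mul_iff_right₀ hn0, mul_sum]
  calc ∑ p ∈ Nat.primesLE n, n * (log p / p)
      ≤ ∑ p ∈ Nat.primesLE n, ((n / p : ℕ) : ℝ) * log p + ∑ p ∈ Nat.primesLE n, log p := by
        rw [← sum_add_distrib]; exact sum_le_sum hterm
    _ ≤ n * log n + n * log 4 := by
        gcongr
        exact (sum_primesLE_div_mul_log_le_log_factorial n).trans hfact
    _ = n * (log n + log 4) := by ring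

theorem sum_Icc_div_log_le_of_sum_le {a : ℕ → ℝ} {c : ℝ}
    (ha : ∀ n, 2 ≤ n → ∑ k ∈ Icc 2 n, a k ≤ log n + c) {n : ℕ} (hn : 2 ≤ n) :
    ∑ k ∈ Icc 2 n, a k / log k ≤
      (∑ k ∈ Icc 2 n, a k - c) / log n + c / log 2 + log (log n) - log (log 2) := by
  induction n, hn using Nat.le_induction with
  | base => simp [sub_div]
  | succ n hn ih =>
    have hL : 0 < log n := log_pos (by exact_mod_cast hn)
    have hLL' : log n ≤ log (n + 1 : ℕ) := log_le_log (by positivity) (by simp)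
    have hL' : 0 < log (n + 1 : ℕ) := hL.trans_le hLL'
    set L := log n
    set L' := log (n + 1 : ℕ)
    set A := ∑ k ∈ Icc 2 n, a k
    -- The weight `1 / log` drops by `1/L - 1/L'`; as `A - c ≤ L`, this costs at most
    -- `1 - L/L'`, which the increment `log L' - log L` of `log log` pays for.
    have hstep : L / L' - 1 ≤ (A - c) * (1 / L' - 1 / L) := by
      have : L * (1 / L' - 1 / L) = L / L' - 1 := by field_simp
      rw [← this]
      exact mul_le_mul_of_nonpos_right (by linarith [ha n hn])
        (sub_nonpos.mpr (one_div_le_one_div_of_le hL hLL'))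
    have hlog : log L - log L' ≤ L / L' - 1 := by
      rw [← log_div hL.ne' hL'.ne']
      exact log_le_sub_one_of_pos (by positivity)
    have hsplit : (A + a (n + 1) - c) / L' =
        (A - c) / L + (A - c) * (1 / L' - 1 / L) + a (n + 1) / L' := by
      field_simp; ring
    rw [sum_Icc_succ_top (by omega), sum_Icc_succ_top (by omega), hsplit]
    linarith

theorem sum_Icc_div_log_le {a : ℕ → ℝ} {c : ℝ}
    (ha : ∀ n, 2 ≤ n → ∑ k ∈ Icc 2 n, a k ≤ log n + c) {n : ℕ} (hn : 2 ≤ n) :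
    ∑ k ∈ Icc 2 n, a k / log k ≤ log (log n) + (1 + c / log 2 - log (log 2)) := by
  have hL : 0 < log n := log_pos (by exact_mod_cast hn)
  have : (∑ k ∈ Icc 2 n, a k - c) / log n ≤ 1 := by
    rw [div_le_one hL]; linarith [ha n hn]
  linarith [sum_Icc_div_log_le_of_sum_le ha hn]

theorem Nat.primesLE_eq_filter_Icc (n : ℕ) : Nat.primesLE n = {k ∈ Icc 2 n | k.Prime} := by
  ext p
  simp only [Nat.mem_primesLE, mem_filter, mem_Icc]
  exact ⟨fun ⟨hpn, hp⟩ => ⟨⟨hp.two_le, hpn⟩, hp⟩, fun ⟨⟨_, hpn⟩, hp⟩ => ⟨hpn, hp⟩⟩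

theorem exists_sum_primesLE_inv_le :
    ∃ C, ∀ n, 2 ≤ n → ∑ p ∈ Nat.primesLE n, (p : ℝ)⁻¹ ≤ log (log n) + C := by
  set a : ℕ → ℝ := fun k => if k.Prime then log k / k else 0
  have hsum (n : ℕ) : ∑ k ∈ Icc 2 n, a k = ∑ p ∈ Nat.primesLE n, log p / p := by
    rw [Nat.primesLE_eq_filter_Icc, sum_filter]
  refine ⟨1 + log 4 / log 2 - log (log 2), fun n hn => ?_⟩
  refine le_of_eq_of_le ?_ (sum_Icc_div_log_le (a := a) (c := log 4)
    (fun n _ => (hsum n).trans_le (sum_primesLE_log_div_le n)) hn)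
  rw [Nat.primesLE_eq_filter_Icc, sum_filter]
  refine sum_congr rfl fun k hk => ?_
  have hk : 1 < (k : ℝ) := by exact_mod_cast (mem_Icc.mp hk).1
  split_ifs <;> simp [a, *, div_div_cancel_left' (log_pos hk).ne']

theorem sum_primesLE_inv_sub_one_le (T : ℕ) :
    ∑ p ∈ Nat.primesLE T, ((p : ℝ) - 1)⁻¹ ≤ ∑ p ∈ Nat.primesLE T, (p : ℝ)⁻¹ + 2 := by
  have hterm : ∀ p ∈ Nat.primesLE T, ((p : ℝ) - 1)⁻¹ ≤ (p : ℝ)⁻¹ + 2 * ((p : ℝ) ^ 2)⁻¹ := by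
    intro p hp
    have hp : (2 : ℝ) ≤ p := by exact_mod_cast (Nat.mem_primesLE.mp hp).2.two_le
    rw [inv_le_iff_one_le_mul₀' (by linarith)]
    field_simp
    nlinarith
  have hsq : ∑ p ∈ Nat.primesLE T, ((p : ℝ) ^ 2)⁻¹ ≤ 1 := by
    calc ∑ p ∈ Nat.primesLE T, ((p : ℝ) ^ 2)⁻¹ ≤ ∑ i ∈ Ioo 1 (T + 1), ((i : ℝ) ^ 2)⁻¹ := by
          refine sum_le_sum_of_subset_of_nonneg (fun p hp => ?_) fun _ _ _ => by positivity
          have ⟨hpT, hp⟩ := Nat.mem_primesLE.mp hp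
          exact mem_Ioo.mpr ⟨hp.one_lt, Nat.lt_succ_of_le hpT⟩
      _ ≤ 2 / ((1 : ℕ) + 1) := sum_Ioo_inv_sq_le 1 (T + 1)
      _ = 1 := by norm_num
  calc ∑ p ∈ Nat.primesLE T, ((p : ℝ) - 1)⁻¹
      ≤ ∑ p ∈ Nat.primesLE T, ((p : ℝ)⁻¹ + 2 * ((p : ℝ) ^ 2)⁻¹) := sum_le_sum hterm
    _ ≤ ∑ p ∈ Nat.primesLE T, (p : ℝ)⁻¹ + 2 := by
        rw [sum_add_distrib, ← mul_sum]; linarith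

theorem Nat.le_totient_mul_exp_sum_inv_sub_one (m : ℕ) :
    (m : ℝ) ≤ φ m * exp (∑ p ∈ m.primeFactors, ((p : ℝ) - 1)⁻¹) := by
  have htot : (φ m : ℝ) = m * ∏ p ∈ m.primeFactors, (1 - (p : ℝ)⁻¹) := by
    have := congrArg (Rat.cast : ℚ → ℝ) (Nat.totient_eq_mul_prod_factors m)
    push_cast at this
    exact this
  have hfactor : ∀ p ∈ m.primeFactors, 1 ≤ (1 - (p : ℝ)⁻¹) * exp ((p : ℝ) - 1)⁻¹ := by
    intro p hp
    have hp : (2 : ℝ) ≤ p := by exact_mod_cast (Nat.prime_of_mem_primeFactors hp).two_le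
    have hp1 : (p : ℝ) - 1 ≠ 0 := by linarith
    calc (1 : ℝ) = (1 - (p : ℝ)⁻¹) * (((p : ℝ) - 1)⁻¹ + 1) := by
          field_simp; ring
      _ ≤ (1 - (p : ℝ)⁻¹) * exp ((p : ℝ) - 1)⁻¹ := by
          gcongr
          · exact sub_nonneg.mpr (inv_le_one_of_one_le₀ (by linarith))
          · exact add_one_le_exp _
  rw [htot, exp_sum, mul_assoc, ← prod_mul_distrib]
  exact le_mul_of_one_le_right (Nat.cast_nonneg m) (one_le_prod hfactor)

theorem Nat.card_primeFactors_le_log (m : ℕ) : #m.primeFactors ≤ Nat.log 2 m := by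
  rcases Nat.eq_zero_or_pos m with rfl | hm
  · simp
  rw [Nat.le_log_iff_pow_le one_lt_two hm.ne']
  calc 2 ^ #m.primeFactors ≤ ∏ p ∈ m.primeFactors, p :=
        pow_card_le_prod _ _ _ fun p hp => (Nat.prime_of_mem_primeFactors hp).two_le
    _ ≤ m := Nat.le_of_dvd hm (Nat.prod_primeFactors_dvd m)

theorem sum_primeFactors_inv_sub_one_le {m T : ℕ} (hT : #m.primeFactors ≤ T) :
    ∑ p ∈ m.primeFactors, ((p : ℝ) - 1)⁻¹ ≤ ∑ p ∈ Nat.primesLE T, ((p : ℝ) - 1)⁻¹ + 1 := by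
  rcases Nat.eq_zero_or_pos T with rfl | hT0
  · simp [card_eq_zero.mp (Nat.le_zero.mp hT)]
  rw [← sum_filter_add_sum_filter_not m.primeFactors (· ≤ T)]
  refine add_le_add ?_ ?_
  · refine sum_le_sum_of_subset_of_nonneg (fun p hp => ?_) fun p hp _ => ?_
    · simp only [mem_filter] at hp
      exact Nat.mem_primesLE.mpr ⟨hp.2, Nat.prime_of_mem_primeFactors hp.1⟩
    · exact inv_nonneg.mpr (sub_nonneg.mpr (by exact_mod_cast (Nat.mem_primesLE.mp hp).2.one_lt.le))
  · calc ∑ p ∈ m.primeFactors with ¬p ≤ T, ((p : ℝ) - 1)⁻¹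
        ≤ ∑ p ∈ m.primeFactors with ¬p ≤ T, (T : ℝ)⁻¹ := by
          refine sum_le_sum fun p hp => ?_
          simp only [mem_filter, not_le] at hp
          exact inv_anti₀ (by exact_mod_cast hT0) (by rw [le_sub_iff_add_le]; exact_mod_cast hp.2)
      _ ≤ T * (T : ℝ)⁻¹ := by
          rw [sum_const, nsmul_eq_mul]
          gcongr
          exact_mod_cast (card_filter_le _ _).trans hT
      _ ≤ 1 := mul_inv_le_one

theorem log_natLog_two_add_one_le {m : ℕ} (hm : 3 ≤ m) :
    log ((Nat.log 2 m + 1 : ℕ) : ℝ) ≤ (1 + log 3 / log (log 3)) * log (log m) := by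
  have hlog3 : 1 < log 3 := by linarith [log_three_gt_d9]
  have hlogm : log 3 ≤ log m := log_le_log (by norm_num) (by exact_mod_cast hm)
  have hloglog : log (log 3) ≤ log (log m) := log_le_log (by linarith) hlogm
  have hloglog3 : 0 < log (log 3) := log_pos hlog3
  have hT : ((Nat.log 2 m + 1 : ℕ) : ℝ) ≤ 3 * log m := by
    have hlog2 : 1 / 2 < log 2 := by linarith [log_two_gt_d9]
    have hnat : (Nat.log 2 m : ℝ) ≤ log m / log 2 := by
      simpa [logb] using natLog_le_logb m 2
    have : log m / log 2 ≤ 2 * log m := by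
      rw [div_le_iff₀ (by linarith)]; nlinarith
    push_cast; linarith
  calc log ((Nat.log 2 m + 1 : ℕ) : ℝ) ≤ log (3 * log m) := log_le_log (by positivity) hT
    _ = log 3 + log (log m) := log_mul (by norm_num) (by linarith)
    _ ≤ log 3 / log (log 3) * log (log m) + log (log m) := by
        gcongr
        rw [div_mul_eq_mul_div, le_div_iff₀ hloglog3]
        gcongr
    _ = (1 + log 3 / log (log 3)) * log (log m) := by ring

theorem exists_le_mul_log_log_mul_totient :
    ∃ C > (0 : ℝ), ∀ m : ℕ, 3 ≤ m → (m : ℝ) ≤ C * log (log m) * φ m := by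
  obtain ⟨C₀, hC₀⟩ := exists_sum_primesLE_inv_le
  have : 0 < log (log 3) := log_pos (by linarith [log_three_gt_d9])
  refine ⟨exp (C₀ + 3) * (1 + log 3 / log (log 3)), by positivity, fun m hm => ?_⟩
  set T := Nat.log 2 m + 1
  have hT : 2 ≤ T := Nat.succ_le_succ (Nat.log_pos one_lt_two (by omega))
  have hlogT : 0 < log T := log_pos (by exact_mod_cast hT)
  have hsum : ∑ p ∈ m.primeFactors, ((p : ℝ) - 1)⁻¹ ≤ log (log T) + (C₀ + 3) := by
    have := sum_primeFactors_inv_sub_one_le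
      ((Nat.card_primeFactors_le_log m).trans (Nat.log 2 m).le_succ)
    linarith [sum_primesLE_inv_sub_one_le T, hC₀ T hT]
  calc (m : ℝ) ≤ φ m * exp (∑ p ∈ m.primeFactors, ((p : ℝ) - 1)⁻¹) :=
        Nat.le_totient_mul_exp_sum_inv_sub_one m
    _ ≤ φ m * (exp (C₀ + 3) * log T) := by
        gcongr
        rw [mul_comm, ← exp_log hlogT, ← exp_add]
        exact exp_le_exp.mpr hsum
    _ ≤ φ m * (exp (C₀ + 3) * ((1 + log 3 / log (log 3)) * log (log m))) := by
        gcongr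
        exact log_natLog_two_add_one_le hm
    _ = exp (C₀ + 3) * (1 + log 3 / log (log 3)) * log (log m) * φ m := by ring

theorem card_filter_dvd_Ico_le (s len : ℕ) {k : ℕ} (hk : 0 < k) :
    #{c ∈ Ico s (s + len) | k ∣ c} ≤ len / k + 2 := by
  calc #{c ∈ Ico s (s + len) | k ∣ c} ≤ #(Ico (s / k) (s / k + (len / k + 2))) := by
        refine card_le_card_of_injOn (· / k) (fun c hc => ?_) fun c₁ hc₁ c₂ hc₂ h => ?_
        · simp only [coe_filter, mem_Ico, Set.mem_ofPred_eq] at hc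
          obtain ⟨⟨hsc, hcs⟩, j, rfl⟩ := hc
          simp only [coe_Ico, Set.mem_Ico, Nat.mul_div_cancel_left j hk]
          refine ⟨Nat.div_le_of_le_mul hsc, Nat.lt_of_mul_lt_mul_left (a := k) ?_⟩
          have := Nat.lt_mul_div_succ s hk
          have := Nat.lt_mul_div_succ len hk
          rw [mul_add, mul_add]
          linarith
        · simp only [coe_filter, Set.mem_ofPred_eq] at hc₁ hc₂
          rw [← Nat.div_mul_cancel hc₁.2, ← Nat.div_mul_cancel hc₂.2]
          exact congrArg (· * k) h
    _ = len / k + 2 := by simp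

theorem card_filter_mul_mod_mem_le (J : Finset ℕ) {m : ℕ} (hm : 0 < m) (z : ℕ) :
    #{a ∈ range m | a * z % m ∈ J} ≤ Nat.gcd z m * #{c ∈ J | Nat.gcd z m ∣ c} := by
  set k := Nat.gcd z m
  set d := m / k
  have hdk : d * k = m := Nat.div_mul_cancel (Nat.gcd_dvd_right z m)
  -- `a` is recovered from `a / d` and `a % d`, and `a * z % m` determines `a % d`.
  calc #{a ∈ range m | a * z % m ∈ J}
      ≤ #(range k ×ˢ {c ∈ J | k ∣ c}) := by
        refine card_le_card_of_injOn (fun a => (a / d, a * z % m)) (fun a ha => ?_)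
          fun a₁ ha₁ a₂ ha₂ h => ?_
        · simp only [coe_filter, mem_range, Set.mem_ofPred_eq] at ha
          simp only [coe_product, Set.mem_prod, coe_range, Set.mem_Iio, coe_filter,
            Set.mem_ofPred_eq]
          refine ⟨?_, ha.2, ?_⟩
          · rw [Nat.div_lt_iff_lt_mul (Nat.pos_of_mul_pos_right (hdk ▸ hm)), mul_comm, hdk]
            exact ha.1
          · exact (Nat.dvd_mod_iff (Nat.gcd_dvd_right z m)).mpr
              (dvd_mul_of_dvd_right (Nat.gcd_dvd_left z m) a)
        · simp only [Prod.mk.injEq] at h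
          have hmod : a₁ % d = a₂ % d := by
            have := Nat.ModEq.cancel_right_div_gcd hm h.2
            rwa [Nat.gcd_comm] at this
          rw [← Nat.div_add_mod a₁ d, ← Nat.div_add_mod a₂ d, h.1, hmod]
    _ = k * #{c ∈ J | k ∣ c} := by rw [card_product, card_range]

theorem card_filter_mul_mod_mem_Ico_le {m : ℕ} (hm : 0 < m) (z s len : ℕ) :
    #{a ∈ range m | a * z % m ∈ Ico s (s + len)} ≤ len + 2 * Nat.gcd z m := by
  have hk : 0 < Nat.gcd z m := Nat.gcd_pos_of_pos_right z hm
  calc #{a ∈ range m | a * z % m ∈ Ico s (s + len)}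
      ≤ Nat.gcd z m * (len / Nat.gcd z m + 2) :=
        (card_filter_mul_mod_mem_le _ hm z).trans
          (Nat.mul_le_mul_left _ (card_filter_dvd_Ico_le s len hk))
    _ ≤ len + 2 * Nat.gcd z m := by
        rw [mul_add, mul_comm _ 2]
        exact Nat.add_le_add_right (Nat.mul_div_le len _) _

theorem add_two_mul_le_of_le_ceil {m n len k : ℕ} (hn : 0 < n) (hnm : n ≤ m)
    (hk : (k : ℚ) ≤ ⌈(m : ℚ) / n⌉) (hlen : (len : ℚ) ≤ ⌈(m : ℚ) / n⌉ + 1) :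
    ((len + 2 * k : ℕ) : ℝ) ≤ 7 * m / n := by
  have hmn : 1 ≤ (m : ℚ) / n := by
    rw [le_div_iff₀ (by exact_mod_cast hn)]
    simpa using (by exact_mod_cast hnm : (n : ℚ) ≤ m)
  have hceil := Int.ceil_lt_add_one ((m : ℚ) / n)
  have hq : ((len + 2 * k : ℕ) : ℚ) ≤ 7 * m / n := by
    push_cast; rw [mul_div_assoc]; linarith
  have := (Rat.cast_le (K := ℝ)).mpr hq
  push_cast at this ⊢
  exact this

/-- For `a` uniform on the units of `Z_m`, a fixed nonzero residue `z` with
`gcd(z,m) ≤ ⌈m/n⌉`, and an interval `I ⊆ {0,...,m-1}` of length at most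
`⌈m/n⌉ + 1`, the probability that `a·z mod m` lands in `I` is
`O((log log m)/n)`. -/
theorem stmt_5 : ∃ C > (0 : ℝ), ∀ m n : ℕ, 3 ≤ m → 0 < n → n ≤ m →
    ∀ z : ℕ, 0 < z → z < m → (Nat.gcd z m : ℚ) ≤ ⌈(m : ℚ) / n⌉ →
    ∀ s len : ℕ, s + len ≤ m → (len : ℚ) ≤ ⌈(m : ℚ) / n⌉ + 1 →
    ((((Finset.range m).filter (fun a => Nat.Coprime a m)).filter
        (fun a => a * z % m ∈ Finset.Ico s (s + len))).card : ℝ) / (Nat.totient m)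
      ≤ C * Real.log (Real.log m) / n := by
  obtain ⟨K, hK, hKm⟩ := exists_le_mul_log_log_mul_totient
  refine ⟨7 * K, by positivity, fun m n hm hn hnm z _ _ hgcd s len _ hlen => ?_⟩
  have hcount : ((((range m).filter (Nat.Coprime · m)).filter
      (fun a => a * z % m ∈ Ico s (s + len))).card : ℝ) ≤ 7 * m / n := by
    refine le_trans ?_ (add_two_mul_le_of_le_ceil hn hnm hgcd hlen)
    refine Nat.cast_le.mpr ((card_le_card fun a ha => ?_).trans
      (card_filter_mul_mod_mem_Ico_le (by omega) z s len))
    simp only [mem_filter] at ha ⊢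
    exact ⟨ha.1.1, ha.2⟩
  have hφ : (0 : ℝ) < φ m := by exact_mod_cast Nat.totient_pos.mpr (by omega)
  have hn' : (0 : ℝ) < n := by exact_mod_cast hn
  rw [div_le_div_iff₀ hφ hn']
  calc _ ≤ 7 * (m : ℝ) / n * n := by gcongr
    _ = 7 * (m : ℝ) := by field_simp
    _ ≤ 7 * K * log (log m) * φ m := by linarith [hKm m hm]
end

section
/- Let n, u, k be positive integers with k ≤ n·u, let c be an integer coprime to k, and let ε ∈ [0, 1/(n·u)). Set a = c/k + ε and a' = c/k. Then for every x ∈ {0,...,u-1}, the bins ⌊frac(a·x)·n⌋ and ⌊frac(a'·x)·n⌋ are either equal or differ by 1 modulo n (i.e., frac(a·x) and frac(a'·x) lie in the same or in adjacent length-1/n pre-bins of the circle R/Z). Consequently the maxloads of Blocked Real Hashing on any set X ⊆ {0,...,u-1} under a and under a' differ by at most a factor of 2. -/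
open scoped Classical

/-- The bin of `x` under Blocked Real Hashing with `n` bins and multiplier `a`. -/
noncomputable def rbin (n : ℕ) (a : ℝ) (x : ℕ) : ℤ := ⌊Int.fract (a * x) * n⌋

/-- The maxload of Blocked Real Hashing with `n` bins and multiplier `a` on `X`. -/
noncomputable def rmaxload (n : ℕ) (a : ℝ) (X : Finset ℕ) : ℕ :=
  (Finset.range n).sup fun b => (X.filter fun x => rbin n a x = (b : ℤ)).card

lemma rbin_nonneg (n : ℕ) (a : ℝ) (x : ℕ) : 0 ≤ rbin n a x :=
  Int.floor_nonneg.2 (mul_nonneg (Int.fract_nonneg _) (Nat.cast_nonneg _))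

lemma rbin_lt (n : ℕ) (hn : 0 < n) (a : ℝ) (x : ℕ) : rbin n a x < n := by
  have hnR : (0:ℝ) < n := by exact_mod_cast hn
  have : Int.fract (a * x) * n < 1 * n :=
    mul_lt_mul_of_pos_right (Int.fract_lt_one _) hnR
  rw [one_mul] at this
  exact Int.floor_lt.2 (by exact_mod_cast this)

lemma key (n : ℕ) (hn : 0 < n) (a' ε : ℝ) (hε0 : 0 ≤ ε) (x : ℕ)
    (hδ : ε * x < 1 / n) :
    rbin n (a' + ε) x = rbin n a' x ∨
    rbin n (a' + ε) x = (rbin n a' x + 1) % n := by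
  have hnR : (0:ℝ) < n := by exact_mod_cast hn
  set r := Int.fract (a' * x) with hr
  set δ := ε * x with hδdef
  have hδ0 : 0 ≤ δ := mul_nonneg hε0 (Nat.cast_nonneg _)
  have hδn : δ * n < 1 := by
    have := mul_lt_mul_of_pos_right hδ hnR
    rwa [one_div, inv_mul_cancel₀ (ne_of_gt hnR)] at this
  have hr0 : 0 ≤ r := Int.fract_nonneg _
  have hr1 : r < 1 := Int.fract_lt_one _
  have hfr : Int.fract ((a' + ε) * x) = Int.fract (r + δ) := by
    have h1 : (a' + ε) * (x:ℝ) = (r + δ) + (⌊a' * x⌋ : ℤ) := by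
      rw [hr]; unfold Int.fract; ring
    rw [h1, Int.fract_add_intCast]
  by_cases hc : r + δ < 1
  · -- no wraparound
    have hself : Int.fract (r + δ) = r + δ :=
      Int.fract_eq_self.2 ⟨add_nonneg hr0 hδ0, hc⟩
    have hprod : (r + δ) * n < r * n + 1 := by nlinarith
    have hlow : ⌊r * (n:ℝ)⌋ ≤ ⌊(r + δ) * n⌋ :=
      Int.floor_le_floor (by nlinarith)
    have hhigh : ⌊(r + δ) * (n:ℝ)⌋ ≤ ⌊r * (n:ℝ)⌋ + 1 := by
      have := Int.floor_le_floor (le_of_lt hprod)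
      rwa [Int.floor_add_one] at this
    have hL : rbin n (a' + ε) x = ⌊(r + δ) * (n:ℝ)⌋ := by
      unfold rbin; rw [hfr, hself]
    have hR : rbin n a' x = ⌊r * (n:ℝ)⌋ := rfl
    rcases eq_or_lt_of_le hlow with h | h
    · left; rw [hL, hR, h]
    · right
      have heq : ⌊(r + δ) * (n:ℝ)⌋ = ⌊r * (n:ℝ)⌋ + 1 := le_antisymm hhigh h
      have hlt : ⌊r * (n:ℝ)⌋ + 1 < (n:ℤ) := by
        rw [← heq]
        apply Int.floor_lt.2
        push_cast
        nlinarith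
      have hge : (0:ℤ) ≤ ⌊r * (n:ℝ)⌋ + 1 := by
        have := rbin_nonneg n a' x
        rw [hR] at this; omega
      rw [hL, hR, heq, Int.emod_eq_of_lt hge hlt]
  · -- wraparound
    push_neg at hc
    have hfr2 : Int.fract (r + δ) = r + δ - 1 := by
      have : Int.fract (r + δ - 1) = Int.fract (r + δ) := by
        have := Int.fract_sub_intCast (r + δ) 1
        simpa using this
      rw [← this]
      exact Int.fract_eq_self.2 ⟨by linarith, by
        have : δ < 1 / n := hδ
        have h1n : (1:ℝ)/n ≤ 1 := by
          rw [div_le_one hnR]; exact_mod_cast hn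
        linarith⟩
    have hL : rbin n (a' + ε) x = 0 := by
      unfold rbin; rw [hfr, hfr2]
      apply Int.floor_eq_zero_iff.2
      constructor
      · nlinarith
      · nlinarith
    have hb : rbin n a' x = (n:ℤ) - 1 := by
      have h1 : rbin n a' x < n := rbin_lt n hn a' x
      have h2 : (n:ℤ) - 1 ≤ rbin n a' x := by
        apply Int.le_floor.2
        push_cast
        nlinarith
      omega
    right
    rw [hL, hb]
    simp
lemma filter_card_le (X : Finset ℕ) (f g : ℕ → ℤ) (b b₁ b₂ : ℤ)
    (h : ∀ x ∈ X, f x = b → g x = b₁ ∨ g x = b₂) :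
    (X.filter fun x => f x = b).card ≤
      (X.filter fun x => g x = b₁).card + (X.filter fun x => g x = b₂).card := by
  calc (X.filter fun x => f x = b).card
      ≤ ((X.filter fun x => g x = b₁) ∪ (X.filter fun x => g x = b₂)).card := by
        apply Finset.card_le_card
        intro x hx
        simp only [Finset.mem_filter, Finset.mem_union] at hx ⊢
        rcases h x hx.1 hx.2 with h' | h'
        · exact Or.inl ⟨hx.1, h'⟩
        · exact Or.inr ⟨hx.1, h'⟩
    _ ≤ _ := Finset.card_union_le _ _

lemma card_le_rmaxload (n : ℕ) (hn : 0 < n) (a : ℝ) (X : Finset ℕ) (b : ℤ)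
    (hb0 : 0 ≤ b) (hbn : b < n) :
    (X.filter fun x => rbin n a x = b).card ≤ rmaxload n a X := by
  have hmem : b.toNat ∈ Finset.range n := by
    simp [Finset.mem_range]; omega
  have := Finset.le_sup (s := Finset.range n) (f := fun b => (X.filter fun x => rbin n a x = (b : ℤ)).card) hmem
  simp only [Int.toNat_of_nonneg hb0] at this
  exact this

/-- Perturbing the multiplier `c/k` by `ε < 1/(nu)` moves every element by at
most one pre-bin, hence changes the maxload by at most a factor of 2. -/
theorem stmt_8 (n u k : ℕ) (hn : 0 < n) (hu : 0 < u) (hk : 0 < k) (hku : k ≤ n * u)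
    (c : ℤ) (hc : IsCoprime c (k : ℤ)) (ε : ℝ) (hε0 : 0 ≤ ε)
    (hε1 : ε < 1 / ((n : ℝ) * u)) :
    (∀ x : ℕ, x < u →
        rbin n ((c : ℝ) / k + ε) x = rbin n ((c : ℝ) / k) x ∨
        rbin n ((c : ℝ) / k + ε) x = (rbin n ((c : ℝ) / k) x + 1) % n) ∧
    ∀ X : Finset ℕ, X ⊆ Finset.range u →
      rmaxload n ((c : ℝ) / k + ε) X ≤ 2 * rmaxload n ((c : ℝ) / k) X ∧
      rmaxload n ((c : ℝ) / k) X ≤ 2 * rmaxload n ((c : ℝ) / k + ε) X := by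
  have hnR : (0:ℝ) < n := by exact_mod_cast hn
  have huR : (0:ℝ) < u := by exact_mod_cast hu
  have hkey : ∀ x : ℕ, x < u →
      rbin n ((c : ℝ) / k + ε) x = rbin n ((c : ℝ) / k) x ∨
      rbin n ((c : ℝ) / k + ε) x = (rbin n ((c : ℝ) / k) x + 1) % n := by
    intro x hx
    apply key n hn _ _ hε0
    have hxu : (x:ℝ) ≤ u := by exact_mod_cast le_of_lt hx
    have h1 : ε * x ≤ ε * u := mul_le_mul_of_nonneg_left hxu hε0
    have h2 : ε * u < (1 / ((n:ℝ) * u)) * u := mul_lt_mul_of_pos_right hε1 huR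
    have h3 : (1 / ((n:ℝ) * u)) * u = 1 / n := by field_simp
    linarith
  refine ⟨hkey, ?_⟩
  intro X hX
  have hxmem : ∀ x ∈ X, x < u := fun x hx => Finset.mem_range.1 (hX hx)
  set a := (c : ℝ) / k + ε
  set a' := (c : ℝ) / k
  constructor
  · -- rmaxload a ≤ 2 * rmaxload a'
    apply Finset.sup_le
    intro b hb
    rw [Finset.mem_range] at hb
    have h1 : (X.filter fun x => rbin n a x = (b:ℤ)).card ≤
        (X.filter fun x => rbin n a' x = (b:ℤ)).card +
        (X.filter fun x => rbin n a' x = ((b:ℤ) - 1) % n).card := by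
      apply filter_card_le
      intro x hx hfx
      rcases hkey x (hxmem x hx) with h | h
      · left; rw [← h, hfx]
      · right
        set t := rbin n a' x with ht
        have ht0 : 0 ≤ t := rbin_nonneg n a' x
        have htn : t < n := rbin_lt n hn a' x
        have hbt : (t + 1) % n = b := by rw [← h, hfx]
        have : ((b:ℤ) - 1) % n = t := by
          rw [← hbt]
          rw [Int.sub_emod, Int.emod_emod_of_dvd _ dvd_rfl, ← Int.sub_emod]
          simp only [add_sub_cancel_right]
          exact Int.emod_eq_of_lt ht0 htn
        rw [this]
    have hb2 : (0:ℤ) ≤ ((b:ℤ) - 1) % n := Int.emod_nonneg _ (by exact_mod_cast hn.ne')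
    have hb2' : ((b:ℤ) - 1) % n < n := Int.emod_lt_of_pos _ (by exact_mod_cast hn)
    have h2 := card_le_rmaxload n hn a' X (b:ℤ) (by positivity) (by exact_mod_cast hb)
    have h3 := card_le_rmaxload n hn a' X (((b:ℤ) - 1) % n) hb2 hb2'
    omega
  · -- rmaxload a' ≤ 2 * rmaxload a
    apply Finset.sup_le
    intro b hb
    rw [Finset.mem_range] at hb
    have h1 : (X.filter fun x => rbin n a' x = (b:ℤ)).card ≤
        (X.filter fun x => rbin n a x = (b:ℤ)).card +
        (X.filter fun x => rbin n a x = ((b:ℤ) + 1) % n).card := by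
      apply filter_card_le
      intro x hx hfx
      rcases hkey x (hxmem x hx) with h | h
      · left; rw [h, hfx]
      · right; rw [h, hfx]
    have hb2 : (0:ℤ) ≤ ((b:ℤ) + 1) % n := Int.emod_nonneg _ (by exact_mod_cast hn.ne')
    have hb2' : ((b:ℤ) + 1) % n < n := Int.emod_lt_of_pos _ (by exact_mod_cast hn)
    have h2 := card_le_rmaxload n hn a X (b:ℤ) (by positivity) (by exact_mod_cast hb)
    have h3 := card_le_rmaxload n hn a X (((b:ℤ) + 1) % n) hb2 hb2'
    omega
end

section
/- Fix positive integers n, u and let a be uniform on (0,1). Define F(a) to be the least positive integer k such that there exists c coprime to k with a ∈ [c/k, c/k + 1/(nu)]. Then for every k ≤ ⌊√(nu)⌋, Pr[F(a) = k] = φ(k)/(nu). -/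
/-! Two reduced fractions `c/k`, `d/j` with `j < k` differ by at least `1/(kj) > 1/(nu)` when
`k² ≤ nu`, so a point claimed by `k` is claimed by no smaller denominator and `F(a) = k` just
says that `a` lies in one of the `φ(k)` intervals `[c/k, c/k + 1/(nu)]`, `0 ≤ c < k`,
`gcd(c, k) = 1`. These intervals lie in `[0, 1]` and overlap at most in endpoints, so the
measure is `φ(k)/(nu)`. -/

open MeasureTheory

/-- `k` claims `a`: `a` is at most `1/(nu)` above a reduced fraction with
denominator `k`. -/
def claims (n u k : ℕ) (a : ℝ) : Prop :=
  ∃ c : ℕ, Nat.Coprime c k ∧ (c : ℝ) / k ≤ a ∧ a ≤ (c : ℝ) / k + 1 / ((n : ℝ) * u)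

/-- `F(a) = k`: `k` is the least positive integer claiming `a`. -/
def FvalEq (n u : ℕ) (a : ℝ) (k : ℕ) : Prop :=
  claims n u k a ∧ ∀ j : ℕ, 0 < j → j < k → ¬claims n u j a

open Set

lemma one_div_mul_le_abs_div_sub_div {c d j k : ℕ} (hc : c.Coprime k) (hj : 0 < j)
    (hjk : j < k) : 1 / ((k : ℝ) * j) ≤ |(c : ℝ) / k - d / j| := by
  have hk : 0 < k := hj.trans hjk
  have hne : (c : ℤ) * j ≠ d * k := by
    intro h
    have hdvd : k ∣ c * j := ⟨d, by rw [mul_comm k]; exact_mod_cast h⟩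
    exact absurd (Nat.le_of_dvd hj (hc.symm.dvd_of_dvd_mul_left hdvd)) hjk.not_ge
  have hone : (1 : ℝ) ≤ |(c : ℝ) * j - d * k| := by
    exact_mod_cast Int.one_le_abs (sub_ne_zero.mpr hne)
  have hsub : (c : ℝ) / k - d / j = ((c : ℝ) * j - d * k) / ((k : ℝ) * j) := by
    field_simp
  have hkj : (0 : ℝ) < k * j := by exact_mod_cast Nat.mul_pos hk hj
  rw [hsub, abs_div, abs_of_pos hkj]
  exact div_le_div_of_nonneg_right hone hkj.le

lemma not_claims_of_claims {n u j k : ℕ} {a : ℝ} (hkk : k * k ≤ n * u) (hj : 0 < j)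
    (hjk : j < k) (hka : claims n u k a) : ¬claims n u j a := by
  obtain ⟨c, hc, hca, hac⟩ := hka
  rintro ⟨d, -, hda, had⟩
  have hkj : ((k * j : ℕ) : ℝ) < (n * u : ℕ) :=
    Nat.cast_lt.mpr ((Nat.mul_lt_mul_left (hj.trans hjk)).mpr hjk |>.trans_le hkk)
  push_cast at hkj
  have hfar : 1 / ((n : ℝ) * u) < |(c : ℝ) / k - d / j| :=
    (one_div_lt_one_div_of_lt (by exact_mod_cast Nat.mul_pos (hj.trans hjk) hj) hkj).trans_le
      (one_div_mul_le_abs_div_sub_div hc hj hjk)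
  have hnear : |(c : ℝ) / k - d / j| ≤ 1 / ((n : ℝ) * u) :=
    abs_le.mpr ⟨by linarith, by linarith⟩
  exact hfar.not_ge hnear

lemma fvalEq_iff_claims {n u k : ℕ} {a : ℝ} (hkk : k * k ≤ n * u) :
    FvalEq n u a k ↔ claims n u k a :=
  ⟨And.left, fun h => ⟨h, fun _ hj hjk => not_claims_of_claims hkk hj hjk h⟩⟩

lemma claims_iff_mem_biUnion {n u k : ℕ} {a : ℝ} (hk : 0 < k) (ha : a < 1) :
    claims n u k a ↔
      a ∈ ⋃ c ∈ {c ∈ Finset.range k | k.Coprime c}, Icc ((c : ℝ) / k) (c / k + 1 / (n * u)) := by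
  simp only [claims, mem_iUnion, Finset.mem_filter, Finset.mem_range, mem_Icc, exists_prop]
  constructor
  · rintro ⟨c, hc, hca, hac⟩
    have hck : (c : ℝ) < k := (div_lt_one (by positivity)).mp (hca.trans_lt ha)
    exact ⟨c, ⟨by exact_mod_cast hck, hc.symm⟩, hca, hac⟩
  · rintro ⟨c, ⟨-, hc⟩, hac⟩
    exact ⟨c, hc.symm, hac⟩

lemma div_add_le_div_of_lt {c d k : ℕ} {δ : ℝ} (hcd : c < d) (hδ : δ ≤ 1 / k) :
    (c : ℝ) / k + δ ≤ d / k := by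
  have hcd' : (c : ℝ) + 1 ≤ d := by exact_mod_cast hcd
  calc (c : ℝ) / k + δ ≤ (c + 1) / k := by rw [add_div]; gcongr
    _ ≤ d / k := by gcongr

lemma Icc_div_add_subset_Icc_zero_one {c k : ℕ} {δ : ℝ} (hck : c < k) (hδ : δ ≤ 1 / k) :
    Icc ((c : ℝ) / k) (c / k + δ) ⊆ Icc 0 1 := by
  have hk : (k : ℝ) ≠ 0 := by exact_mod_cast (c.zero_le.trans_lt hck).ne'
  refine Icc_subset_Icc (by positivity) ?_
  simpa [hk] using div_add_le_div_of_lt hck hδ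

lemma aedisjoint_Icc_of_le {a b c d : ℝ} (h : b ≤ c) :
    AEDisjoint volume (Icc a b) (Icc c d) :=
  measure_mono_null (t := Icc c b) (fun _ hx => ⟨hx.2.1, hx.1.2⟩)
    (by rw [Real.volume_Icc, ENNReal.ofReal_eq_zero]; linarith)

lemma pairwise_aedisjoint_Icc_div_add {k : ℕ} {δ : ℝ} (hδ : δ ≤ 1 / k) :
    Pairwise (Function.onFun (AEDisjoint volume) fun c : ℕ => Icc ((c : ℝ) / k) (c / k + δ)) := by
  intro c d hne
  rcases hne.lt_or_gt with hcd | hdc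
  · exact aedisjoint_Icc_of_le (div_add_le_div_of_lt hcd hδ)
  · exact (aedisjoint_Icc_of_le (div_add_le_div_of_lt hdc hδ)).symm

theorem stmt_12_general (n u : ℕ) (k : ℕ) (hk : 0 < k)
    (hksqrt : k ≤ Nat.sqrt (n * u)) :
    volume {a ∈ Set.Ioo (0 : ℝ) 1 | FvalEq n u a k} =
      ENNReal.ofReal ((Nat.totient k : ℝ) / ((n : ℝ) * u)) := by
  have hkk : k * k ≤ n * u := Nat.le_sqrt.mp hksqrt
  have hkN : (k : ℝ) ≤ n * u := by exact_mod_cast (Nat.le_mul_self k).trans hkk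
  set N : ℝ := (n : ℝ) * u
  rw [Nat.totient_eq_card_coprime]
  set T := {c ∈ Finset.range k | k.Coprime c}
  have hδ : 1 / N ≤ 1 / k := one_div_le_one_div_of_le (by positivity) hkN
  have hset : {a ∈ Ioo (0 : ℝ) 1 | FvalEq n u a k} =
      Ioo 0 1 ∩ ⋃ c ∈ T, Icc ((c : ℝ) / k) (c / k + 1 / N) := by
    ext a
    simp only [mem_ofPred_eq, mem_inter_iff, fvalEq_iff_claims hkk]
    exact and_congr_right fun ha => claims_iff_mem_biUnion hk ha.2
  have hsub : (⋃ c ∈ T, Icc ((c : ℝ) / k) (c / k + 1 / N)) ⊆ Icc 0 1 :=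
    iUnion₂_subset fun c hc =>
      Icc_div_add_subset_Icc_zero_one (Finset.mem_range.mp (Finset.mem_filter.mp hc).1) hδ
  have hends : Ioo (0 : ℝ) 1 =ᵐ[volume] Icc 0 1 := Ioo_ae_eq_Icc
  rw [hset]
  refine (measure_congr (hends.inter (ae_eq_refl _))).trans ?_
  rw [inter_eq_right.mpr hsub,
    measure_biUnion_finset₀ ((pairwise_aedisjoint_Icc_div_add hδ).set_pairwise _)
      fun _ _ => measurableSet_Icc.nullMeasurableSet]
  simp only [Real.volume_Icc, add_sub_cancel_left, Finset.sum_const, nsmul_eq_mul,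
    div_eq_mul_one_div (T.card : ℝ), ENNReal.ofReal_mul (Nat.cast_nonneg _),
    ENNReal.ofReal_natCast]

/-- For `a` uniform on `(0,1)` and `k ≤ ⌊√(nu)⌋`, `Pr[F(a) = k] = φ(k)/(nu)`. -/
theorem stmt_12 (n u : ℕ) (hn : 0 < n) (hu : 0 < u) (k : ℕ) (hk : 0 < k)
    (hksqrt : k ≤ Nat.sqrt (n * u)) :
    volume {a ∈ Set.Ioo (0 : ℝ) 1 | FvalEq n u a k} =
      ENNReal.ofReal ((Nat.totient k : ℝ) / ((n : ℝ) * u)) :=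
  stmt_12_general n u k hk hksqrt
end

section
/- Fix positive integers n, u and let a be uniform on (0,1). With F(a) the least k such that a lies within 1/(nu) above a reduced fraction with denominator k, for every k ∈ {1,...,nu}, Pr[F(a) = k] ≤ O(1/√(nu)). In particular, writing k = α√(nu) with α ≥ 1, Pr[F(a)=k] ≤ (2 + 2 ln α)/(α √(nu)). -/
/-!
If `F(a) = k` and `a ∈ [c/k, c/k + 1/(nu)]`, then `a` lies below the right neighbour `p/j` of
`c/k` in the Farey sequence of order `k` (`kp - cj = 1`, `0 < j < k`): otherwise the smaller
denominator `j` would already claim `a`. Since `p/j - c/k = 1/(jk)` and `c ↦ j` is injective,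
`Pr[F(a) = k] ≤ ∑_{j=1}^{k} min(1/(nu), 1/(jk))`. Bounding the terms with `j ≤ nu/k` by `1/(nu)`
and the others by a harmonic tail `∑_{nu/k < j ≤ k} 1/j ≤ log(2k²/(nu))` gives the estimate.
-/

open MeasureTheory

open Real

section Farey

variable {k c : ℕ}

/-- For `c` coprime to `k ≥ 2`, the denominator `j ∈ (0, k)` of the right neighbour of `c/k` in
the Farey sequence of order `k`, determined by `cj ≡ -1 (mod k)`. -/
def fareyDenom (k c : ℕ) : ℕ := (-(c : ZMod k)⁻¹).val

lemma fareyDenom_lt (hk : 0 < k) (c : ℕ) : fareyDenom k c < k :=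
  have : NeZero k := ⟨hk.ne'⟩
  ZMod.val_lt _

lemma natCast_mul_fareyDenom (hk : 0 < k) (hc : c.Coprime k) :
    (c : ZMod k) * fareyDenom k c = -1 := by
  have : NeZero k := ⟨hk.ne'⟩
  rw [fareyDenom, ZMod.natCast_zmod_val, mul_neg, ZMod.coe_mul_inv_eq_one c hc]

lemma fareyDenom_pos (hk : 2 ≤ k) (hc : c.Coprime k) : 0 < fareyDenom k c := by
  have : Fact (1 < k) := ⟨hk⟩
  refine Nat.pos_of_ne_zero fun h => ?_
  have h' := natCast_mul_fareyDenom (by omega) hc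
  rw [h, Nat.cast_zero, mul_zero, zero_eq_neg] at h'
  exact one_ne_zero h'

lemma dvd_mul_fareyDenom_add_one (hk : 0 < k) (hc : c.Coprime k) :
    k ∣ c * fareyDenom k c + 1 := by
  rw [← ZMod.natCast_eq_zero_iff, Nat.cast_add, Nat.cast_mul, natCast_mul_fareyDenom hk hc,
    Nat.cast_one, neg_add_cancel]

lemma fareyDenom_injOn (hk : 0 < k) :
    Set.InjOn (fareyDenom k) {c | c < k ∧ c.Coprime k} := by
  rintro c₁ ⟨hc₁k, hc₁⟩ c₂ ⟨hc₂k, hc₂⟩ h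
  have h₁ := natCast_mul_fareyDenom hk hc₁
  have h₂ := natCast_mul_fareyDenom hk hc₂
  rw [h] at h₁
  have hmod : (c₁ : ZMod k) = c₂ := by linear_combination c₁ * h₂ - c₂ * h₁
  rwa [ZMod.natCast_eq_natCast_iff', Nat.mod_eq_of_lt hc₁k, Nat.mod_eq_of_lt hc₂k] at hmod

end Farey

section Neighbours

variable {k p c j : ℕ}

lemma coprime_of_mul_eq_mul_add_one (h : k * p = c * j + 1) : p.Coprime j := by
  have h' : (k : ℤ) * p = c * j + 1 := by exact_mod_cast h
  exact Nat.isCoprime_iff_coprime.mp ⟨k, -c, by linear_combination h'⟩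

lemma div_eq_div_add_one_div_of_mul_eq_mul_add_one (hk : 0 < k) (hj : 0 < j)
    (h : k * p = c * j + 1) : (p : ℝ) / j = c / k + 1 / (j * k) := by
  have h' : (k : ℝ) * p = c * j + 1 := by exact_mod_cast h
  field_simp
  linear_combination h'

end Neighbours

section Covering

variable {n u k c : ℕ} {a : ℝ}

lemma lt_add_one_div_fareyDenom_of_fvalEq (hk : 2 ≤ k) (hc : c.Coprime k)
    (hF : FvalEq n u a k) (hac : a ≤ c / k + 1 / ((n : ℝ) * u)) :
    a < c / k + 1 / (fareyDenom k c * k) := by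
  have hj := fareyDenom_pos hk hc
  obtain ⟨p, hp⟩ := dvd_mul_fareyDenom_add_one (by omega) hc
  have hpj := div_eq_div_add_one_div_of_mul_eq_mul_add_one (by omega) hj hp.symm
  rw [← hpj]
  by_contra! hpa
  refine hF.2 _ hj (fareyDenom_lt (by omega) c)
    ⟨p, coprime_of_mul_eq_mul_add_one hp.symm, hpa, hac.trans ?_⟩
  rw [hpj]
  gcongr
  exact le_add_of_nonneg_right (by positivity)

lemma setOf_fvalEq_subset_biUnion (hk : 2 ≤ k) :
    {a ∈ Set.Ioo (0 : ℝ) 1 | FvalEq n u a k} ⊆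
      ⋃ c ∈ (Finset.range k).filter (·.Coprime k),
        Set.Icc ((c : ℝ) / k) (c / k + min (1 / ((n : ℝ) * u)) (1 / (fareyDenom k c * k))) := by
  rintro a ⟨⟨-, ha1⟩, hF⟩
  obtain ⟨c, hc, hca, hac⟩ := hF.1
  have hck : c < k := by
    have hc1 : (c : ℝ) / k < 1 := hca.trans_lt ha1
    rw [div_lt_one (by positivity)] at hc1
    exact_mod_cast hc1
  refine Set.mem_iUnion₂.mpr ⟨c, Finset.mem_filter.mpr ⟨Finset.mem_range.mpr hck, hc⟩, hca, ?_⟩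
  rw [← min_add_add_left]
  exact le_min hac (lt_add_one_div_fareyDenom_of_fvalEq hk hc hF hac).le

end Covering

/-- The `j`-th term bounds the part of `[c/k, c/k + 1/T]` below the Farey neighbour of `c/k`
with denominator `j`. -/
noncomputable def fareySum (T : ℝ) (k : ℕ) : ℝ := ∑ j ∈ Finset.Icc 1 k, min (1 / T) (1 / (j * k))

lemma volume_setOf_fvalEq_le_fareySum {n u k : ℕ} (hk : 1 ≤ k) :
    volume {a ∈ Set.Ioo (0 : ℝ) 1 | FvalEq n u a k} ≤ ENNReal.ofReal (fareySum (n * u) k) := by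
  obtain rfl | hk := hk.eq_or_lt
  · refine (measure_mono (t := Set.Icc 0 (min (1 / ((n : ℝ) * u)) 1)) ?_).trans
      (by simp [fareySum, Real.volume_Icc])
    rintro a ⟨⟨ha0, ha1⟩, ⟨c, -, hca, hac⟩, -⟩
    have hc : c = 0 := by
      rw [Nat.cast_one, div_one] at hca
      exact_mod_cast Nat.lt_one_iff.mp (by exact_mod_cast hca.trans_lt ha1)
    subst hc
    rw [Nat.cast_zero, zero_div, zero_add] at hac
    exact ⟨ha0.le, le_min hac ha1.le⟩
  set A := (Finset.range k).filter (·.Coprime k)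
  set g : ℕ → ℝ := fun j => min (1 / ((n : ℝ) * u)) (1 / (j * k))
  have hinj : Set.InjOn (fareyDenom k) A :=
    (fareyDenom_injOn (by omega)).mono fun c hc => by simpa [A] using hc
  calc volume {a ∈ Set.Ioo (0 : ℝ) 1 | FvalEq n u a k}
      ≤ ∑ c ∈ A, volume (Set.Icc ((c : ℝ) / k) (c / k + g (fareyDenom k c))) :=
        (measure_mono (setOf_fvalEq_subset_biUnion hk)).trans (measure_biUnion_finset_le _ _)
    _ = ENNReal.ofReal (∑ j ∈ A.image (fareyDenom k), g j) := by
        rw [Finset.sum_image hinj, ENNReal.ofReal_sum_of_nonneg fun _ _ => by positivity]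
        simp only [Real.volume_Icc, add_sub_cancel_left]
    _ ≤ ENNReal.ofReal (fareySum (n * u) k) := by
        refine ENNReal.ofReal_le_ofReal
          (Finset.sum_le_sum_of_subset_of_nonneg ?_ fun _ _ _ => by positivity)
        intro j hj
        obtain ⟨c, hcA, rfl⟩ := Finset.mem_image.mp hj
        have hc := (Finset.mem_filter.mp hcA).2
        exact Finset.mem_Icc.mpr ⟨fareyDenom_pos hk hc, (fareyDenom_lt (by omega) c).le⟩

lemma sum_Ioc_inv_le_log_sub_log {m N : ℕ} (hm : 0 < m) (hmN : m ≤ N) :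
    ∑ j ∈ Finset.Ioc m N, (j : ℝ)⁻¹ ≤ log N - log m := by
  have hm' : (0 : ℝ) < m := by exact_mod_cast hm
  rw [← Finset.Ico_add_one_add_one_eq_Ioc, ← Finset.sum_Ico_add']
  calc ∑ i ∈ Finset.Ico m N, ((i + 1 : ℕ) : ℝ)⁻¹
      ≤ ∫ x in (m : ℝ)..N, x⁻¹ := (inv_antitoneOn_Icc_right hm').sum_le_integral_Ico hmN
    _ = log N - log m := by
        have hN : (0 : ℝ) < N := hm'.trans_le (by exact_mod_cast hmN)
        rw [integral_inv_of_pos hm' hN, log_div hN.ne' hm'.ne']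

lemma fareySum_le_of_sqrt_le {T : ℝ} {k : ℕ} (hk : 1 ≤ k) (hkT : (k : ℝ) ≤ T)
    (hTk : √T ≤ k) : fareySum T k ≤ (2 + 2 * log (k / √T)) / k := by
  have hk0 : (0 : ℝ) < k := by exact_mod_cast hk
  have hT0 : 0 < T := hk0.trans_le hkT
  set m := ⌊T / k⌋₊
  have hm1 : 1 ≤ m := Nat.le_floor (by rwa [Nat.cast_one, one_le_div hk0])
  have hmk : m ≤ k := Nat.floor_le_of_le <| by
    rw [div_le_iff₀ hk0]
    nlinarith [sq_sqrt hT0.le, sqrt_nonneg T]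
  have hm_le : (m : ℝ) ≤ T / k := Nat.floor_le (by positivity)
  have hm_gt : T / k < m + 1 := Nat.lt_floor_add_one _
  have hlow : ∑ j ∈ Finset.Ioc 0 m, min (1 / T) (1 / (j * k)) ≤ 1 / k := calc
    _ ≤ ∑ j ∈ Finset.Ioc 0 m, 1 / T := Finset.sum_le_sum fun _ _ => min_le_left _ _
    _ = m / T := by simp [div_eq_mul_inv]
    _ ≤ 1 / k := by rw [div_le_div_iff₀ hT0 hk0]; rw [le_div_iff₀ hk0] at hm_le; linarith
  have hhigh : ∑ j ∈ Finset.Ioc m k, min (1 / T) (1 / (j * k)) ≤ (log k - log m) / k := calc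
    _ ≤ ∑ j ∈ Finset.Ioc m k, (j : ℝ)⁻¹ / k :=
        Finset.sum_le_sum fun _ _ => (min_le_right _ _).trans_eq (by ring)
    _ ≤ (log k - log m) / k := by
        rw [← Finset.sum_div]
        gcongr
        exact sum_Ioc_inv_le_log_sub_log hm1 hmk
  have hlog : log k - log m ≤ log 2 + 2 * log (k / √T) := by
    have h2m : T / k ≤ 2 * m := by
      have : (1 : ℝ) ≤ m := by exact_mod_cast hm1
      linarith
    have hlogm := log_le_log (by positivity) h2m
    rw [log_div hT0.ne' hk0.ne', log_mul two_ne_zero (by positivity)] at hlogm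
    rw [log_div hk0.ne' (sqrt_pos.mpr hT0).ne', log_sqrt hT0.le]
    linarith
  have hlog2 : log 2 ≤ 1 := by linarith [log_two_lt_d9]
  rw [fareySum, show Finset.Icc 1 k = Finset.Ioc 0 k from Finset.Icc_add_one_left_eq_Ioc 0 k, ← Finset.sum_Ioc_consecutive _ (Nat.zero_le m) hmk]
  calc _ ≤ 1 / k + (log k - log m) / k := add_le_add hlow hhigh
    _ ≤ (2 + 2 * log (k / √T)) / k := by
        rw [← add_div]
        exact div_le_div_of_nonneg_right (by linarith) hk0.le

lemma fareySum_le_two_div_sqrt {T : ℝ} {k : ℕ} (hk : 1 ≤ k) (hkT : (k : ℝ) ≤ T) :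
    fareySum T k ≤ 2 / √T := by
  have hk0 : (0 : ℝ) < k := by exact_mod_cast hk
  have hT0 : 0 < T := hk0.trans_le hkT
  have hs0 : 0 < √T := sqrt_pos.mpr hT0
  rcases le_total (k : ℝ) √T with hks | hsk
  · calc fareySum T k ≤ ∑ j ∈ Finset.Icc 1 k, 1 / T :=
          Finset.sum_le_sum fun _ _ => min_le_left _ _
      _ = k / T := by simp [div_eq_mul_inv]
      _ ≤ √T / T := by gcongr
      _ = 1 / √T := by rw [div_eq_div_iff (by positivity) hs0.ne', one_mul, mul_self_sqrt hT0.le]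
      _ ≤ 2 / √T := by gcongr; norm_num
  · refine (fareySum_le_of_sqrt_le hk hkT hsk).trans ?_
    calc (2 + 2 * log (k / √T)) / k ≤ 2 * (k / √T) / k := by
          gcongr
          linarith [log_le_sub_one_of_pos (div_pos hk0 hs0)]
      _ = 2 / √T := by field_simp

/-- For `a` uniform on `(0,1)` and any `k ∈ {1,...,nu}`,
`Pr[F(a) = k] ≤ O(1/√(nu))`; in particular, writing `k = α√(nu)` with `α ≥ 1`,
`Pr[F(a) = k] ≤ (2 + 2 ln α)/(α√(nu)) = (2 + 2 ln(k/√(nu)))/k`. -/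
theorem stmt_13 : ∃ C > (0 : ℝ), ∀ n u : ℕ, 0 < n → 0 < u → ∀ k : ℕ, 1 ≤ k → k ≤ n * u →
    volume {a ∈ Set.Ioo (0 : ℝ) 1 | FvalEq n u a k} ≤
      ENNReal.ofReal (C / Real.sqrt ((n : ℝ) * u)) ∧
    (Real.sqrt ((n : ℝ) * u) ≤ k →
      volume {a ∈ Set.Ioo (0 : ℝ) 1 | FvalEq n u a k} ≤
        ENNReal.ofReal ((2 + 2 * Real.log ((k : ℝ) / Real.sqrt ((n : ℝ) * u))) / k)) := by
  refine ⟨2, two_pos, fun n u _ _ k hk hkT => ?_⟩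
  have hkT' : (k : ℝ) ≤ n * u := by exact_mod_cast hkT
  have hvol := volume_setOf_fvalEq_le_fareySum (n := n) (u := u) hk
  exact ⟨hvol.trans (ENNReal.ofReal_le_ofReal (fareySum_le_two_div_sqrt hk hkT')),
    fun hsk => hvol.trans (ENNReal.ofReal_le_ofReal (fareySum_le_of_sqrt_le hk hkT' hsk))⟩
end

section
/- Fix n ≥ 2 and u with n^6 ≤ u ≤ n^C for some constant C, and let X ⊆ {0,...,u-1} with |X| = n. Let a be uniform on (0,1) and let F(a) be as above. Then with probability at least 1 − 1/n, all distinct pairs x, y ∈ X satisfy x ≢ y (mod F(a)). -/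
open MeasureTheory

/-! If two distinct `x, y ∈ X` collide modulo `F(a) = k`, then `k` divides `x - y`, so the bad
event lies in the union of the events `F(a) = k` over the divisors `k` of the nonzero differences;
by the divisor bound `τ(d) ≤ 24^(2^24) d^(1/24)` there are at most `n² 24^(2^24) u^(1/24)` such `k`.
Each event `F(a) = k` has measure at most `k/(nu)`, since `a` is within `1/(nu)` of one of the `k`
fractions `c/k`, and at most `(1 + log k)/k`, since `a` also lies below the right Farey
neighbour `c/k + 1/(kq)` of `c/k` (else the smaller denominator `q` would claim `a`) and distinct
numerators `c` give distinct `q < k`. So each event has measure at most `√((1 + log u)/(nu))`,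
and `u ≥ n⁶` makes the union bound at most `1/n`. -/

open Finset Real

theorem Nat.succ_pow_le_pow_mul_two_pow (m e : ℕ) : (e + 1) ^ m ≤ m ^ m * 2 ^ e := by
  rcases Nat.eq_zero_or_pos m with rfl | hm
  · simp [Nat.one_le_two_pow]
  have he : e + 1 ≤ m * (e / m + 1) := by
    have := Nat.lt_div_mul_add (a := e) hm
    nlinarith
  calc (e + 1) ^ m ≤ (m * (e / m + 1)) ^ m := Nat.pow_le_pow_left he m
    _ ≤ (m * 2 ^ (e / m)) ^ m := by gcongr; exact Nat.lt_two_pow_self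
    _ = m ^ m * 2 ^ (e / m * m) := by rw [mul_pow, ← pow_mul]
    _ ≤ m ^ m * 2 ^ e := by gcongr; exacts [one_le_two, Nat.div_mul_le_self e m]

theorem Nat.card_divisors_pow_le (m : ℕ) {d : ℕ} (hd : d ≠ 0) :
    #d.divisors ^ m ≤ m ^ (m * 2 ^ m) * d := by
  have hfactor : ∀ p ∈ d.primeFactors, (d.factorization p + 1) ^ m ≤
      (if p < 2 ^ m then m ^ m else 1) * p ^ d.factorization p := by
    intro p hp
    have hp2 := (Nat.prime_of_mem_primeFactors hp).two_le
    split_ifs with hpm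
    · exact (Nat.succ_pow_le_pow_mul_two_pow m _).trans (by gcongr)
    · calc (d.factorization p + 1) ^ m ≤ (2 ^ d.factorization p) ^ m := by
            gcongr; exact Nat.lt_two_pow_self
        _ = (2 ^ m) ^ d.factorization p := by rw [← pow_mul, ← pow_mul, mul_comm]
        _ ≤ 1 * p ^ d.factorization p := by rw [one_mul]; gcongr; omega
  have hsmall : ∏ p ∈ d.primeFactors, (if p < 2 ^ m then m ^ m else 1) ≤ m ^ (m * 2 ^ m) := by
    rw [← prod_filter, prod_const, pow_mul]
    refine Nat.pow_le_pow_right (Nat.pos_of_ne_zero (by cases m <;> simp)) ?_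
    exact (card_le_card fun p hp => mem_range.2 (mem_filter.1 hp).2).trans (card_range _).le
  calc #d.divisors ^ m = ∏ p ∈ d.primeFactors, (d.factorization p + 1) ^ m := by
        rw [Nat.card_divisors hd, prod_pow]
    _ ≤ ∏ p ∈ d.primeFactors, (if p < 2 ^ m then m ^ m else 1) * p ^ d.factorization p :=
        prod_le_prod' hfactor
    _ = (∏ p ∈ d.primeFactors, (if p < 2 ^ m then m ^ m else 1)) * d := by
        rw [prod_mul_distrib, ← Nat.prod_primeFactors_pow_factorization hd]
    _ ≤ m ^ (m * 2 ^ m) * d := by gcongr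

theorem Nat.card_divisors_le_mul_rpow {m : ℕ} (hm : m ≠ 0) (d : ℕ) :
    (#d.divisors : ℝ) ≤ (m : ℝ) ^ 2 ^ m * (d : ℝ) ^ (m⁻¹ : ℝ) := by
  rcases eq_or_ne d 0 with rfl | hd
  · simp only [Nat.divisors_zero, card_empty, Nat.cast_zero]
    positivity
  have hpow : ((#d.divisors : ℝ) ^ m) ≤ ((m : ℝ) ^ 2 ^ m) ^ m * d := by
    rw [← pow_mul, mul_comm (2 ^ m)]
    exact_mod_cast Nat.card_divisors_pow_le m hd
  calc (#d.divisors : ℝ) = ((#d.divisors : ℝ) ^ m) ^ (m⁻¹ : ℝ) :=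
        (Real.pow_rpow_inv_natCast (Nat.cast_nonneg _) hm).symm
    _ ≤ (((m : ℝ) ^ 2 ^ m) ^ m * d) ^ (m⁻¹ : ℝ) := by gcongr
    _ = (m : ℝ) ^ 2 ^ m * (d : ℝ) ^ (m⁻¹ : ℝ) := by
        rw [Real.mul_rpow (by positivity) (Nat.cast_nonneg _),
          Real.pow_rpow_inv_natCast (by positivity) hm]

theorem Real.min_le_sqrt_mul {a b : ℝ} (ha : 0 ≤ a) (hb : 0 ≤ b) : min a b ≤ √(a * b) :=
  Real.le_sqrt_of_sq_le <| by
    rw [sq]; exact mul_le_mul (min_le_left a b) (min_le_right a b) (le_min ha hb) ha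

theorem sum_Ico_one_div_le_one_add_log (k : ℕ) : ∑ q ∈ Ico 1 k, (1 : ℝ) / q ≤ 1 + log k := by
  calc ∑ q ∈ Ico 1 k, (1 : ℝ) / q ≤ ∑ q ∈ Icc 1 k, (1 : ℝ) / q :=
        sum_le_sum_of_subset_of_nonneg Ico_subset_Icc_self fun _ _ _ => by positivity
    _ ≤ 1 + log k := by simpa [harmonic_eq_sum_Icc] using harmonic_le_one_add_log k

/-- The denominator `q` of the right Farey neighbour `p / q = c / k + 1 / (k q)` of `c / k`. -/
def fareyDen (k c : ℕ) : ℕ := (-(c : ZMod k)⁻¹).val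

section Farey

variable {k c : ℕ}

theorem dvd_mul_fareyDen_add_one [NeZero k] (hc : c.Coprime k) : k ∣ c * fareyDen k c + 1 := by
  rw [← ZMod.natCast_eq_zero_iff]
  push_cast
  rw [fareyDen, ZMod.natCast_zmod_val, mul_neg, ZMod.coe_mul_inv_eq_one c hc, neg_add_cancel]

theorem fareyDen_lt [NeZero k] : fareyDen k c < k := ZMod.val_lt _

theorem fareyDen_pos (hk : 1 < k) (hc : c.Coprime k) : 0 < fareyDen k c := by
  have : Fact (1 < k) := ⟨hk⟩
  refine Nat.pos_of_ne_zero fun h => ?_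
  rw [fareyDen, ZMod.val_eq_zero, neg_eq_zero] at h
  simpa [h] using ZMod.coe_mul_inv_eq_one c hc

theorem fareyDen_injOn [NeZero k] : Set.InjOn (fareyDen k) {c | c < k ∧ c.Coprime k} := by
  rintro c₁ ⟨hc₁k, hc₁⟩ c₂ ⟨hc₂k, hc₂⟩ h
  have hinv : (c₁ : ZMod k)⁻¹ = (c₂ : ZMod k)⁻¹ := neg_injective (ZMod.val_injective k h)
  have hcast : (c₁ : ZMod k) = c₂ := by
    calc (c₁ : ZMod k) = c₁ * (c₂ * (c₂ : ZMod k)⁻¹) := by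
          rw [ZMod.coe_mul_inv_eq_one c₂ hc₂, mul_one]
      _ = c₂ * (c₁ * (c₁ : ZMod k)⁻¹) := by rw [hinv]; ring
      _ = c₂ := by rw [ZMod.coe_mul_inv_eq_one c₁ hc₁, mul_one]
  rw [← ZMod.val_cast_of_lt hc₁k, hcast, ZMod.val_cast_of_lt hc₂k]

end Farey

theorem Nat.lt_of_cast_div_le_of_lt_one {k c : ℕ} {a : ℝ} (hk : k ≠ 0) (hca : (c : ℝ) / k ≤ a)
    (ha : a < 1) : c < k := by
  have : (c : ℝ) < k := (div_lt_one (by positivity)).1 (hca.trans_lt ha)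
  exact_mod_cast this

theorem FvalEq.le_add_one_div_fareyDen {n u k c : ℕ} {a : ℝ} (hk : 1 < k) (hF : FvalEq n u a k)
    (hc : c.Coprime k) (hac : a ≤ c / k + 1 / ((n : ℝ) * u)) :
    a ≤ c / k + 1 / ((k : ℝ) * fareyDen k c) := by
  have : NeZero k := ⟨by omega⟩
  set q := fareyDen k c
  obtain ⟨p, hp⟩ := dvd_mul_fareyDen_add_one hc
  have hq : 0 < q := fareyDen_pos hk hc
  have hpq : p.Coprime q := by
    rw [← Nat.isCoprime_iff_coprime]
    have hpZ : (c * q + 1 : ℤ) = k * p := by exact_mod_cast hp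
    exact ⟨k, -c, by linear_combination -hpZ⟩
  have hval : (p : ℝ) / q = c / k + 1 / (k * q) := by
    have hpR : (c : ℝ) * q + 1 = k * p := by exact_mod_cast hp
    field_simp
    linear_combination -hpR
  by_contra! hlt
  refine hF.2 q hq fareyDen_lt ⟨p, hpq, by rw [hval]; exact hlt.le, ?_⟩
  have : (0 : ℝ) ≤ 1 / (k * q) := by positivity
  rw [hval]
  linarith

theorem volume_biUnion_Icc_le {ι : Type*} (s : Finset ι) (a ℓ : ι → ℝ) (hℓ : ∀ i ∈ s, 0 ≤ ℓ i) :
    volume (⋃ i ∈ s, Set.Icc (a i) (a i + ℓ i)) ≤ ENNReal.ofReal (∑ i ∈ s, ℓ i) :=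
  calc volume (⋃ i ∈ s, Set.Icc (a i) (a i + ℓ i))
      ≤ ∑ i ∈ s, volume (Set.Icc (a i) (a i + ℓ i)) := measure_biUnion_finset_le _ _
    _ = ∑ i ∈ s, ENNReal.ofReal (ℓ i) := by simp [Real.volume_Icc]
    _ = ENNReal.ofReal (∑ i ∈ s, ℓ i) := (ENNReal.ofReal_sum_of_nonneg hℓ).symm

theorem volume_claims_le (n u : ℕ) {k : ℕ} (hk : k ≠ 0) :
    volume {a ∈ Set.Ioo (0 : ℝ) 1 | claims n u k a} ≤ ENNReal.ofReal (k / ((n : ℝ) * u)) := by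
  have hcover : {a ∈ Set.Ioo (0 : ℝ) 1 | claims n u k a} ⊆
      ⋃ c ∈ range k, Set.Icc ((c : ℝ) / k) (c / k + 1 / ((n : ℝ) * u)) := by
    rintro a ⟨⟨-, ha1⟩, c, -, hca, hac⟩
    exact Set.mem_biUnion (mem_range.2 (Nat.lt_of_cast_div_le_of_lt_one hk hca ha1)) ⟨hca, hac⟩
  refine (measure_mono hcover).trans
    ((volume_biUnion_Icc_le _ _ _ fun _ _ => by positivity).trans_eq ?_)
  rw [sum_const, card_range, nsmul_eq_mul, mul_one_div]

theorem volume_FvalEq_le (n u : ℕ) {k : ℕ} (hk : k ≠ 0) :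
    volume {a ∈ Set.Ioo (0 : ℝ) 1 | FvalEq n u a k} ≤ ENNReal.ofReal ((1 + log k) / k) := by
  obtain rfl | hk1 : k = 1 ∨ 1 < k := by omega
  · simpa [Real.volume_Ioo] using measure_mono (μ := volume) (Set.sep_subset (Set.Ioo (0 : ℝ) 1) _)
  have : NeZero k := ⟨hk⟩
  set C := (range k).filter (·.Coprime k)
  have hcover : {a ∈ Set.Ioo (0 : ℝ) 1 | FvalEq n u a k} ⊆
      ⋃ c ∈ C, Set.Icc ((c : ℝ) / k) (c / k + 1 / ((k : ℝ) * fareyDen k c)) := by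
    rintro a ⟨⟨-, ha1⟩, hF⟩
    obtain ⟨c, hc, hca, hac⟩ := hF.1
    exact Set.mem_biUnion
      (mem_filter.2 ⟨mem_range.2 (Nat.lt_of_cast_div_le_of_lt_one hk hca ha1), hc⟩)
      ⟨hca, hF.le_add_one_div_fareyDen hk1 hc hac⟩
  have hsum : ∑ c ∈ C, 1 / ((k : ℝ) * fareyDen k c) ≤ (1 + log k) / k := by
    have hinj : Set.InjOn (fareyDen k) C := fareyDen_injOn.mono fun c hc => by
      simpa using mem_filter.1 hc
    calc ∑ c ∈ C, 1 / ((k : ℝ) * fareyDen k c) = ∑ q ∈ C.image (fareyDen k), 1 / ((k : ℝ) * q) :=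
          (sum_image (f := fun q : ℕ => 1 / ((k : ℝ) * q)) hinj).symm
      _ ≤ ∑ q ∈ Ico 1 k, 1 / ((k : ℝ) * q) := by
          refine sum_le_sum_of_subset_of_nonneg ?_ fun _ _ _ => by positivity
          intro q hq
          obtain ⟨c, hc, rfl⟩ := mem_image.1 hq
          exact mem_Ico.2 ⟨fareyDen_pos hk1 (mem_filter.1 hc).2, fareyDen_lt⟩
      _ = (∑ q ∈ Ico 1 k, (1 : ℝ) / q) / k := by
          rw [sum_div]; exact sum_congr rfl fun q _ => by rw [div_div, mul_comm]
      _ ≤ (1 + log k) / k := by gcongr; exact sum_Ico_one_div_le_one_add_log k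
  exact (measure_mono hcover).trans <| (volume_biUnion_Icc_le _ _ _ fun _ _ => by positivity).trans
    (ENNReal.ofReal_le_ofReal hsum)

theorem volume_FvalEq_le_sqrt (n : ℕ) {u k : ℕ} (hk : k ≠ 0) (hku : k ≤ u) :
    volume {a ∈ Set.Ioo (0 : ℝ) 1 | FvalEq n u a k} ≤
      ENNReal.ofReal √((1 + log u) / ((n : ℝ) * u)) := by
  have hsub : {a ∈ Set.Ioo (0 : ℝ) 1 | FvalEq n u a k} ⊆
      {a ∈ Set.Ioo (0 : ℝ) 1 | claims n u k a} := fun _ ha => ⟨ha.1, ha.2.1⟩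
  refine (le_min ((measure_mono hsub).trans (volume_claims_le n u hk))
    (volume_FvalEq_le n u hk)).trans ?_
  rw [← ENNReal.ofReal_min]
  refine ENNReal.ofReal_le_ofReal ?_
  calc min (k / ((n : ℝ) * u)) ((1 + log k) / k)
      ≤ √(k / ((n : ℝ) * u) * ((1 + log k) / k)) :=
        Real.min_le_sqrt_mul (by positivity) (by have := Real.log_natCast_nonneg k; positivity)
    _ = √((1 + log k) / ((n : ℝ) * u)) := by congr 1; field_simp
    _ ≤ √((1 + log u) / ((n : ℝ) * u)) := by gcongr

/-- `p.1 - p.2` truncates to `0` when `p.1 < p.2`, and `Nat.divisors 0 = ∅`. -/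
def collisionModuli (X : Finset ℕ) : Finset ℕ :=
  (X ×ˢ X).biUnion fun p => (p.1 - p.2).divisors

section collisionModuli

variable {X : Finset ℕ} {u : ℕ}

theorem mem_collisionModuli_of_modEq {x y k : ℕ} (hx : x ∈ X) (hy : y ∈ X) (hxy : x ≠ y)
    (h : x ≡ y [MOD k]) : k ∈ collisionModuli X := by
  wlog hlt : y < x generalizing x y
  · exact this hy hx hxy.symm h.symm (by omega)
  exact mem_biUnion.2 ⟨(x, y), mem_product.2 ⟨hx, hy⟩,
    Nat.mem_divisors.2 ⟨(Nat.modEq_iff_dvd' hlt.le).1 h.symm, by omega⟩⟩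

theorem pos_and_le_of_mem_collisionModuli (hX : X ⊆ range u) {k : ℕ}
    (hk : k ∈ collisionModuli X) : 0 < k ∧ k ≤ u := by
  obtain ⟨p, hp, hkd⟩ := mem_biUnion.1 hk
  have := mem_range.1 (hX (mem_product.1 hp).1)
  exact ⟨Nat.pos_of_mem_divisors hkd, (Nat.divisor_le hkd).trans (by omega)⟩

theorem card_collisionModuli_le (hX : X ⊆ range u) {m : ℕ} (hm : m ≠ 0) :
    (#(collisionModuli X) : ℝ) ≤ #X ^ 2 * ((m : ℝ) ^ 2 ^ m * (u : ℝ) ^ (m⁻¹ : ℝ)) := by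
  have hτ : ∀ p ∈ X ×ˢ X, (#(p.1 - p.2).divisors : ℝ) ≤ (m : ℝ) ^ 2 ^ m * (u : ℝ) ^ (m⁻¹ : ℝ) := by
    intro p hp
    have : p.1 - p.2 ≤ u := by have := mem_range.1 (hX (mem_product.1 hp).1); omega
    exact (Nat.card_divisors_le_mul_rpow hm _).trans (by gcongr)
  calc (#(collisionModuli X) : ℝ) ≤ ∑ p ∈ X ×ˢ X, (#(p.1 - p.2).divisors : ℝ) := by
        exact_mod_cast card_biUnion_le
    _ ≤ #(X ×ˢ X) • ((m : ℝ) ^ 2 ^ m * (u : ℝ) ^ (m⁻¹ : ℝ)) := sum_le_card_nsmul _ _ _ hτ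
    _ = #X ^ 2 * ((m : ℝ) ^ 2 ^ m * (u : ℝ) ^ (m⁻¹ : ℝ)) := by
        rw [card_product, nsmul_eq_mul]; push_cast; ring

theorem volume_FvalEq_collision_le (n : ℕ) (hX : X ⊆ range u) :
    volume {a ∈ Set.Ioo (0 : ℝ) 1 |
        ¬∀ k : ℕ, FvalEq n u a k → ∀ x ∈ X, ∀ y ∈ X, x ≠ y → ¬(x ≡ y [MOD k])} ≤
      ENNReal.ofReal (#(collisionModuli X) * √((1 + log u) / ((n : ℝ) * u))) := by
  have hcover : {a ∈ Set.Ioo (0 : ℝ) 1 |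
        ¬∀ k : ℕ, FvalEq n u a k → ∀ x ∈ X, ∀ y ∈ X, x ≠ y → ¬(x ≡ y [MOD k])} ⊆
      ⋃ k ∈ collisionModuli X, {a ∈ Set.Ioo (0 : ℝ) 1 | FvalEq n u a k} := by
    rintro a ⟨ha, hbad⟩
    push Not at hbad
    obtain ⟨k, hF, x, hx, y, hy, hxy, hmod⟩ := hbad
    exact Set.mem_biUnion (mem_collisionModuli_of_modEq hx hy hxy hmod) ⟨ha, hF⟩
  calc _ ≤ ∑ k ∈ collisionModuli X, volume {a ∈ Set.Ioo (0 : ℝ) 1 | FvalEq n u a k} :=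
        (measure_mono hcover).trans (measure_biUnion_finset_le _ _)
    _ ≤ ∑ _k ∈ collisionModuli X, ENNReal.ofReal √((1 + log u) / ((n : ℝ) * u)) :=
        sum_le_sum fun k hk =>
          have hku := pos_and_le_of_mem_collisionModuli hX hk
          volume_FvalEq_le_sqrt n hku.1.ne' hku.2
    _ = _ := by
        rw [sum_const, nsmul_eq_mul, ENNReal.ofReal_mul (by positivity), ENNReal.ofReal_natCast]

end collisionModuli

theorem MeasureTheory.ofReal_one_sub_le_measure_sep {α : Type*} [MeasurableSpace α]
    {μ : Measure α} {s : Set α} (hs : μ s = 1) {p : α → Prop} {ε : ℝ} (hε : 0 ≤ ε)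
    (h : μ {a ∈ s | ¬p a} ≤ ENNReal.ofReal ε) : ENNReal.ofReal (1 - ε) ≤ μ {a ∈ s | p a} := by
  rw [ENNReal.ofReal_sub _ hε, ENNReal.ofReal_one, tsub_le_iff_right]
  calc 1 = μ s := hs.symm
    _ ≤ μ ({a ∈ s | p a} ∪ {a ∈ s | ¬p a}) := measure_mono fun a ha => by
        by_cases hp : p a
        exacts [Or.inl ⟨ha, hp⟩, Or.inr ⟨ha, hp⟩]
    _ ≤ μ {a ∈ s | p a} + μ {a ∈ s | ¬p a} := measure_union_le _ _
    _ ≤ μ {a ∈ s | p a} + ENNReal.ofReal ε := by gcongr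

theorem sq_mul_rpow_mul_sqrt_le {C : ℝ} (hC : 1 ≤ C) {n u : ℕ} (hn : (25 * C ^ 2) ^ 4 ≤ n)
    (hu : n ^ 6 ≤ u) :
    (n : ℝ) ^ 2 * (C * (u : ℝ) ^ (24⁻¹ : ℝ)) * √((1 + log u) / ((n : ℝ) * u)) ≤ 1 / n := by
  set z := (u : ℝ) ^ (24⁻¹ : ℝ) with hzdef
  have hz0 : 0 ≤ z := by positivity
  have huz : (u : ℝ) = z ^ 24 := by
    rw [hzdef, ← Real.rpow_natCast, ← Real.rpow_mul (Nat.cast_nonneg _)]; norm_num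
  have hn1 : 1 ≤ (n : ℝ) := le_trans (one_le_pow₀ (by nlinarith)) hn
  have hnz : (n : ℝ) ≤ z ^ 4 := by
    refine (pow_le_pow_iff_left₀ (by positivity) (by positivity) (by norm_num : 6 ≠ 0)).1 ?_
    rw [← pow_mul, ← huz]; exact_mod_cast hu
  have hCz : 25 * C ^ 2 ≤ z :=
    (pow_le_pow_iff_left₀ (by positivity) hz0 (by norm_num : 4 ≠ 0)).1 (hn.trans hnz)
  have hz1 : 1 ≤ z := by nlinarith
  have hlog : 1 + log u ≤ 25 * z := by
    have := Real.log_le_rpow_div (Nat.cast_nonneg u) (by norm_num : (0 : ℝ) < 24⁻¹)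
    rw [← hzdef, div_inv_eq_mul] at this
    linarith
  have hCL : C ^ 2 * (1 + log u) ≤ z ^ 2 :=
    calc C ^ 2 * (1 + log u) ≤ C ^ 2 * (25 * z) := by gcongr
      _ = 25 * C ^ 2 * z := by ring
      _ ≤ z ^ 2 := (mul_le_mul_of_nonneg_right hCz hz0).trans_eq (sq z).symm
  have hkey : (n : ℝ) ^ 5 * (C ^ 2 * (1 + log u)) * z ^ 2 ≤ z ^ 24 :=
    calc (n : ℝ) ^ 5 * (C ^ 2 * (1 + log u)) * z ^ 2 ≤ (z ^ 4) ^ 5 * z ^ 2 * z ^ 2 := by gcongr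
      _ = z ^ 24 := by ring
  have hu0 : (0 : ℝ) < u := by rw [huz]; positivity
  rw [← Real.sqrt_sq (by positivity : 0 ≤ (n : ℝ) ^ 2 * (C * z)), ← Real.sqrt_mul (by positivity),
    ← Real.sqrt_sq (by positivity : (0 : ℝ) ≤ 1 / n)]
  gcongr
  calc ((n : ℝ) ^ 2 * (C * z)) ^ 2 * ((1 + log u) / (n * u))
      = (n : ℝ) ^ 5 * (C ^ 2 * (1 + log u)) * z ^ 2 / u / n ^ 2 := by
        field_simp [hu0.ne', (by positivity : (n : ℝ) ≠ 0)]
    _ ≤ (u : ℝ) / u / n ^ 2 := by gcongr; exact hkey.trans_eq huz.symm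
    _ = (1 / n) ^ 2 := by rw [div_self hu0.ne', one_div_pow]

/-- For `n` sufficiently large, `n^6 ≤ u ≤ n^K`, and any `n`-element
`X ⊆ {0,...,u-1}`: with probability at least `1 − 1/n` over `a` uniform on
`(0,1)`, no two distinct elements of `X` are congruent modulo `F(a)`. -/
theorem stmt_14 (K : ℕ) : ∃ N : ℕ, ∀ n : ℕ, N ≤ n → ∀ u : ℕ, n ^ 6 ≤ u → u ≤ n ^ K →
    ∀ X : Finset ℕ, X ⊆ Finset.range u → X.card = n →
    ENNReal.ofReal (1 - 1 / (n : ℝ)) ≤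
      volume {a ∈ Set.Ioo (0 : ℝ) 1 |
        ∀ k : ℕ, FvalEq n u a k → ∀ x ∈ X, ∀ y ∈ X, x ≠ y → ¬(x ≡ y [MOD k])} := by
  set C : ℝ := 24 ^ 2 ^ 24
  refine ⟨⌈(25 * C ^ 2) ^ 4⌉₊, fun n hn u hu _ X hX hXcard => ?_⟩
  refine ofReal_one_sub_le_measure_sep (by simp [Real.volume_Ioo]) (by positivity) ?_
  refine (volume_FvalEq_collision_le n hX).trans (ENNReal.ofReal_le_ofReal ?_)
  calc (#(collisionModuli X) : ℝ) * √((1 + log u) / ((n : ℝ) * u))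
      ≤ (n : ℝ) ^ 2 * (C * (u : ℝ) ^ (24⁻¹ : ℝ)) * √((1 + log u) / ((n : ℝ) * u)) := by
        gcongr
        simpa [hXcard, C] using card_collisionModuli_le hX (m := 24) (by norm_num)
    _ ≤ 1 / n := sq_mul_rpow_mul_sqrt_le (one_le_pow₀ (by norm_num)) (Nat.ceil_le.1 hn) hu
end

section
/- For every x ∈ Z_p (p prime) and every n ≥ 2, there exist m ∈ {1,...,n-1}, k ∈ {0,...,⌈p/n⌉}, and a sign σ ∈ {+1, −1} such that x ≡ σ·m^{-1}·k (mod p), where m^{-1} is the inverse of m modulo p. -/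
lemma aux_key {p : ℕ} [Fact p.Prime] (x : ZMod p) (m : ℕ) (hm : (m : ZMod p) ≠ 0)
    (s : ZMod p) (k : ℕ) (h : x * m = s * k) : x = s * (m : ZMod p)⁻¹ * (k : ZMod p) := by
  calc x = x * m * (m : ZMod p)⁻¹ := by
        rw [mul_assoc, mul_inv_cancel₀ hm, mul_one]
    _ = s * k * (m : ZMod p)⁻¹ := by rw [h]
    _ = s * (m : ZMod p)⁻¹ * k := by ring

/-- Every `x ∈ Z_p` can be written as `σ·m⁻¹·k (mod p)` with `1 ≤ m < n`,
`0 ≤ k ≤ ⌈p/n⌉`, and sign `σ ∈ {±1}`. -/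
theorem stmt_15 (p : ℕ) (hp : p.Prime) (n : ℕ) (hn : 2 ≤ n) (x : ZMod p) :
    ∃ (m k : ℕ) (σ : ℤ), 1 ≤ m ∧ m < n ∧ (k : ℤ) ≤ ⌈(p : ℚ) / n⌉ ∧
      (σ = 1 ∨ σ = -1) ∧ x = (σ : ZMod p) * (m : ZMod p)⁻¹ * (k : ZMod p) := by
  haveI : Fact p.Prime := ⟨hp⟩
  have hp0 : 0 < p := hp.pos
  have hn0 : 0 < n := by omega
  set c : ℕ := ⌈(p : ℚ) / n⌉₊ with hc_def
  have hq : (0:ℚ) < (p : ℚ) / n := by positivity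
  have hc1 : 1 ≤ c := Nat.one_le_ceil_iff.mpr hq
  have hcZ : (c : ℤ) = ⌈(p : ℚ) / n⌉ := Int.natCast_ceil_eq_ceil hq.le
  have hkc : ∀ k : ℕ, k ≤ c → (k : ℤ) ≤ ⌈(p : ℚ) / n⌉ := by
    intro k hk; rw [← hcZ]; exact_mod_cast hk
  have hpc : p ≤ c * n := by
    have h1 : (p : ℚ) / n ≤ c := Nat.le_ceil _
    have h2 : (p : ℚ) ≤ c * n := by
      rw [div_le_iff₀ (by positivity)] at h1; exact h1
    exact_mod_cast h2
  rcases le_or_gt n p with hnp | hnp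
  · -- main case : n ≤ p
    have hc0 : 0 < c := hc1
    have fbd : ∀ i : Fin n, ((x * ((i : ℕ) : ZMod p)).val) / c < n := by
      intro i
      rw [Nat.div_lt_iff_lt_mul hc0]
      exact lt_of_lt_of_le ((x * ((i : ℕ) : ZMod p)).val_lt) (by rw [mul_comm] at hpc; exact hpc)
    set f : Fin n → Fin n := fun i => ⟨(x * ((i : ℕ) : ZMod p)).val / c, fbd i⟩ with hf
    -- general step : from two indices a < b in the same bucket
    have main : ∀ a b : Fin n, (a : ℕ) < (b : ℕ) → f a = f b →
        ∃ (m k : ℕ) (σ : ℤ), 1 ≤ m ∧ m < n ∧ (k : ℤ) ≤ ⌈(p : ℚ) / n⌉ ∧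
        (σ = 1 ∨ σ = -1) ∧ x = (σ : ZMod p) * (m : ZMod p)⁻¹ * (k : ZMod p) := by
      intro a b hab hfab
      set va := (x * ((a : ℕ) : ZMod p)).val with hva
      set vb := (x * ((b : ℕ) : ZMod p)).val with hvb
      have hbuck : va / c = vb / c := by
        have := congrArg Fin.val hfab
        simpa [hf] using this
      have hclose : vb < va + c ∧ va < vb + c := by
        have e1 : c * (va / c) + va % c = va := Nat.div_add_mod va c
        have e2 : c * (vb / c) + vb % c = vb := Nat.div_add_mod vb c
        have r1 : va % c < c := Nat.mod_lt _ hc0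
        have r2 : vb % c < c := Nat.mod_lt _ hc0
        rw [hbuck] at e1
        omega
      have hlt1 : vb < va + c := hclose.1
      have hlt2 : va < vb + c := hclose.2
      set m : ℕ := (b : ℕ) - (a : ℕ) with hm_def
      have hm1 : 1 ≤ m := by omega
      have hmn : m < n := by have := b.isLt; omega
      have hmne : (m : ZMod p) ≠ 0 := by
        have : (m : ZMod p).val = m := ZMod.val_cast_of_lt (by omega)
        intro h; rw [h] at this; simp [ZMod.val_zero] at this; omega
      have hxm : x * (m : ZMod p) = x * ((b : ℕ) : ZMod p) - x * ((a : ℕ) : ZMod p) := by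
        rw [hm_def, Nat.cast_sub hab.le]; ring
      rcases le_or_gt va vb with hle | hlt
      · refine ⟨m, vb - va, 1, hm1, hmn, hkc _ (by omega), Or.inl rfl, ?_⟩
        apply aux_key x m hmne
        rw [hxm]
        push_cast [Nat.cast_sub hle]
        rw [ZMod.natCast_val, ZMod.natCast_val]
        simp [ZMod.cast_id]
      · refine ⟨m, va - vb, -1, hm1, hmn, hkc _ (by omega), Or.inr rfl, ?_⟩
        apply aux_key x m hmne
        rw [hxm]
        push_cast [Nat.cast_sub hlt.le]
        rw [ZMod.natCast_val, ZMod.natCast_val]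
        simp [ZMod.cast_id]
    by_cases hinj : Function.Injective f
    · have hsurj : Function.Surjective f := Finite.surjective_of_injective hinj
      obtain ⟨i, hi⟩ := hsurj ⟨n - 1, by omega⟩
      set v := (x * ((i : ℕ) : ZMod p)).val with hv
      have hdiv : v / c = n - 1 := by
        have := congrArg Fin.val hi
        simpa [hf] using this
      have hvge : (n - 1) * c ≤ v := by
        rw [← hdiv]; exact Nat.div_mul_le_self _ _
      have hcn : c * n = c * (n - 1) + c := by
        have : c * (n - 1 + 1) = c * (n - 1) + c := by ring
        rwa [Nat.sub_add_cancel (by omega)] at this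
      have hvpos : 0 < v := by nlinarith
      have hi1 : 1 ≤ (i : ℕ) := by
        by_contra h
        have : (i : ℕ) = 0 := by omega
        rw [hv, this] at hvpos; simp at hvpos
      have hvp : v < p := ZMod.val_lt _
      have hkle : p - v ≤ c := by
        have h3 : c * (n - 1) = (n - 1) * c := Nat.mul_comm _ _
        omega
      refine ⟨(i : ℕ), p - v, -1, hi1, i.isLt, hkc _ hkle, Or.inr rfl, ?_⟩
      have hmne : (((i : ℕ) : ZMod p)) ≠ 0 := by
        have : (((i : ℕ) : ZMod p)).val = (i : ℕ) := ZMod.val_cast_of_lt (by omega)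
        intro h; rw [h] at this; simp [ZMod.val_zero] at this; omega
      apply aux_key x (i : ℕ) hmne
      push_cast [Nat.cast_sub hvp.le]
      rw [ZMod.natCast_val]
      simp [ZMod.natCast_self, ZMod.cast_id]
    · rw [Function.not_injective_iff] at hinj
      obtain ⟨a, b, hfab, hab⟩ := hinj
      rcases Nat.lt_or_ge (a : ℕ) (b : ℕ) with h | h
      · exact main a b h hfab
      · have h' : (b : ℕ) < (a : ℕ) := by
          have : (a : ℕ) ≠ (b : ℕ) := fun e => hab (Fin.ext e)
          omega
        exact main b a h' hfab.symm
  · -- easy case : p < n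
    rcases eq_or_ne x 0 with rfl | hx
    · exact ⟨1, 0, 1, le_refl 1, by omega, hkc 0 (by omega), Or.inl rfl, by simp⟩
    · have hxi : x⁻¹ ≠ 0 := inv_ne_zero hx
      set m := (x⁻¹).val with hm
      have hm1 : 1 ≤ m := by
        rcases Nat.eq_zero_or_pos m with h | h
        · exfalso; apply hxi
          have h2 : ((m : ℕ) : ZMod p) = x⁻¹ := by
            rw [hm, ZMod.natCast_val, ZMod.cast_id]
          rw [h] at h2; simpa using h2.symm
        · exact h
      have hmn : m < n := lt_of_lt_of_le (ZMod.val_lt _) (by omega)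
      refine ⟨m, 1, 1, hm1, hmn, hkc 1 hc1, Or.inl rfl, ?_⟩
      have : ((m : ℕ) : ZMod p) = x⁻¹ := by
        rw [hm, ZMod.natCast_val, ZMod.cast_id]
      rw [this]
      simp [inv_inv]
end

section
/- Let a ∈ (0,1) and define g(a) = min{k ∈ ℕ₊ : the distance from a·k to the nearest integer is < 1/n}. For any integer k with 1 ≤ k ≤ n, if a is uniform on (0,1) then Pr[g(a) = k] ≤ 2/n. -/
open MeasureTheory

/-- For `a` uniform on `(0,1)` and `1 ≤ k ≤ n`, the probability that `k` is the
least positive integer with `‖a·k‖ < 1/n` (distance to the nearest integer) is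
at most `2/n`. -/
theorem stmt_19 (n : ℕ) (hn : 0 < n) (k : ℕ) (hk1 : 1 ≤ k) (hkn : k ≤ n) :
    volume {a ∈ Set.Ioo (0 : ℝ) 1 |
        min (Int.fract (a * k)) (1 - Int.fract (a * k)) < 1 / n ∧
        ∀ j : ℕ, 0 < j → j < k →
          ¬min (Int.fract (a * j)) (1 - Int.fract (a * j)) < 1 / n} ≤
      ENNReal.ofReal (2 / (n : ℝ)) := by
  have hk0 : (0:ℝ) < k := by exact_mod_cast hk1
  have hn0 : (0:ℝ) < n := by exact_mod_cast hn
  set U : ℕ → Set ℝ := fun c =>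
    Set.Ico ((c:ℝ)/k) ((c:ℝ)/k + 1/(n*k)) ∪
    Set.Ioc (((c:ℝ)+1)/k - 1/(n*k)) (((c:ℝ)+1)/k) with hU
  have hsub : {a ∈ Set.Ioo (0 : ℝ) 1 |
        min (Int.fract (a * k)) (1 - Int.fract (a * k)) < 1 / n ∧
        ∀ j : ℕ, 0 < j → j < k →
          ¬min (Int.fract (a * j)) (1 - Int.fract (a * j)) < 1 / n} ⊆
      ⋃ c ∈ Finset.range k, U c := by
    rintro a ⟨⟨ha0, ha1⟩, hmin, -⟩
    have ht0 : 0 < a * k := mul_pos ha0 hk0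
    have htk : a * k < k := by nlinarith
    have hfl0 : 0 ≤ ⌊a * k⌋ := Int.floor_nonneg.mpr ht0.le
    have hflk : ⌊a * k⌋ < (k : ℤ) := Int.floor_lt.mpr (by exact_mod_cast htk)
    set c := ⌊a * k⌋.toNat with hcdef
    have hc : (c : ℝ) = ⌊a * k⌋ := by
      rw [hcdef]; exact_mod_cast congrArg (fun z : ℤ => (z : ℝ)) (Int.toNat_of_nonneg hfl0)
    have hck : c < k := by omega
    refine Set.mem_biUnion (Finset.mem_range.mpr hck) ?_
    have hle : (⌊a * k⌋ : ℝ) ≤ a * k := Int.floor_le _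
    have hlt : a * k < ⌊a * k⌋ + 1 := Int.lt_floor_add_one _
    rcases min_lt_iff.mp hmin with h | h
    · left
      rw [Int.fract] at h
      constructor
      · rw [div_le_iff₀ hk0, hc]; exact hle
      · have h1 : a * k < (c:ℝ) + 1/n := by rw [hc]; linarith
        have h2 : a < ((c:ℝ) + 1/n)/k := (lt_div_iff₀ hk0).mpr h1
        have h3 : ((c:ℝ) + 1/n)/k = (c:ℝ)/k + 1/(n*k) := by
          field_simp
        linarith
    · right
      rw [Int.fract] at h
      constructor
      · have h1 : (c:ℝ) + 1 - 1/n < a * k := by rw [hc]; linarith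
        have h2 : ((c:ℝ) + 1 - 1/n)/k < a := (div_lt_iff₀ hk0).mpr h1
        have h3 : ((c:ℝ) + 1 - 1/n)/k = ((c:ℝ)+1)/k - 1/(n*k) := by
          field_simp
        linarith
      · have h1 : a * k ≤ (c:ℝ) + 1 := by rw [hc]; linarith
        have h2 : a ≤ ((c:ℝ) + 1)/k := (le_div_iff₀ hk0).mpr h1
        linarith
  have hbound : ∀ c : ℕ, volume (U c) ≤ ENNReal.ofReal (2/((n:ℝ)*k)) := by
    intro c
    have h1 : volume (U c) ≤
        volume (Set.Ico ((c:ℝ)/k) ((c:ℝ)/k + 1/(n*k))) +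
        volume (Set.Ioc (((c:ℝ)+1)/k - 1/(n*k)) (((c:ℝ)+1)/k)) :=
      measure_union_le _ _
    rw [Real.volume_Ico, Real.volume_Ioc] at h1
    have e1 : (c:ℝ)/k + 1/(n*k) - (c:ℝ)/k = 1/(n*k) := by ring
    have e2 : ((c:ℝ)+1)/k - (((c:ℝ)+1)/k - 1/(n*k)) = 1/(n*k) := by ring
    rw [e1, e2, ← ENNReal.ofReal_add (by positivity) (by positivity)] at h1
    refine h1.trans_eq ?_
    congr 1
    ring
  calc volume {a ∈ Set.Ioo (0 : ℝ) 1 |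
        min (Int.fract (a * k)) (1 - Int.fract (a * k)) < 1 / n ∧
        ∀ j : ℕ, 0 < j → j < k →
          ¬min (Int.fract (a * j)) (1 - Int.fract (a * j)) < 1 / n}
      ≤ volume (⋃ c ∈ Finset.range k, U c) := measure_mono hsub
    _ ≤ ∑ c ∈ Finset.range k, volume (U c) := measure_biUnion_finset_le _ _
    _ ≤ ∑ c ∈ Finset.range k, ENNReal.ofReal (2/((n:ℝ)*k)) :=
        Finset.sum_le_sum fun c _ => hbound c
    _ = ENNReal.ofReal (2 / (n : ℝ)) := by
        rw [Finset.sum_const, Finset.card_range, nsmul_eq_mul,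
          ← ENNReal.ofReal_natCast k, ← ENNReal.ofReal_mul (by positivity)]
        congr 1
        field_simp
end
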